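/- arXiv:2006.02794 — 6 statements merged into one kernel-verified Lean document; each statement's English description precedes it below -/
import Mathlib

section
/- Let S be a set of positive integers and let n ≥ 1 and k ≥ 1 be integers. Then L_S(n,k) = Σ_{s∈S} s·(n−1)_{s−1}·L_S(n−s, k−1), where the sum has only finitely many nonzero terms (terms with s > n vanish) and (m)_j denotes the falling factorial m(m−1)⋯(m−j+1). -/
open Finset
open scoped Classical

/-- A partition of `Fin N` into nonempty lists of distinct elements:
every element lies in exactly one list of `P`. -/
def IsListPartition {N : ℕ} (P : Finset (List (Fin N))) : Prop :=
  (∀ l ∈ P, l ≠ [] ∧ l.Nodup) ∧ ∀ x : Fin N, ∃! l, l ∈ P ∧ x ∈ l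

/-- The set of partitions of `{1,…,n+r}` (encoded as `Fin (n+r)`) into `k+r` nonempty
lists whose lengths lie in `S`, such that the first `r` elements lie in distinct lists. -/
def srLahSet (S : Set ℕ) (r n k : ℕ) : Set (Finset (List (Fin (n + r)))) :=
  {P | IsListPartition P ∧ P.card = k + r ∧ (∀ l ∈ P, l.length ∈ S) ∧
    ∀ i j : Fin (n + r), (i : ℕ) < r → (j : ℕ) < r → i ≠ j →
      ∀ l ∈ P, i ∈ l → j ∉ l}

/-- The `(S,r)`-Lah number `L_{S,r}(n,k)`. -/
noncomputable def srLah (S : Set ℕ) (r n k : ℕ) : ℕ := Nat.card (srLahSet S r n k)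

/-- The `(S,r)`-Lah number with integer arguments, zero for negative arguments. -/
noncomputable def srLahZ (S : Set ℕ) (r : ℕ) (n k : ℤ) : ℤ :=
  if 0 ≤ n ∧ 0 ≤ k then srLah S r n.toNat k.toNat else 0

/-!
Split off the list containing the first element. If it has length `s ∈ S`, it is a list of `s`
distinct elements containing that element: `s` positions for it and `(n - 1)_{s - 1}` ordered
choices for the rest. The remaining lists partition the other `n - s` elements into `k - 1`
lists, and relabelling those elements by `Fin (n - s)` shows there are `L_S(n - s, k - 1)` ways.
-/

section ListPartitions

variable {α β : Type*} {S : Set ℕ} {s : Set α} {k : ℕ}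

/-- Partitions of a subset `s` rather than of the whole type, so that removing one list leaves
a partition of the same kind. -/
structure IsListPartitionOf (S : Set ℕ) (s : Set α) (P : Finset (List α)) : Prop where
  ne_nil : ∀ l ∈ P, l ≠ []
  nodup : ∀ l ∈ P, l.Nodup
  length_mem : ∀ l ∈ P, l.length ∈ S
  mem_of_mem : ∀ l ∈ P, ∀ x ∈ l, x ∈ s
  exists_mem : ∀ x ∈ s, ∃ l ∈ P, x ∈ l
  eq_of_mem : ∀ l ∈ P, ∀ l' ∈ P, ∀ x ∈ l, x ∈ l' → l = l'

def listPartitions (S : Set ℕ) (s : Set α) (k : ℕ) : Set (Finset (List α)) :=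
  {P | IsListPartitionOf S s P ∧ P.card = k}

theorem srLahSet_zero (S : Set ℕ) (n k : ℕ) :
    srLahSet S 0 n k = listPartitions S (Set.univ : Set (Fin n)) k := by
  ext P
  simp only [srLahSet, IsListPartition, listPartitions, Set.mem_ofPred_eq]
  constructor
  · rintro ⟨⟨hne, huniq⟩, hcard, hlen, -⟩
    exact ⟨⟨fun l hl => (hne l hl).1, fun l hl => (hne l hl).2, hlen, fun _ _ _ _ => trivial,
      fun x _ => (huniq x).exists,
      fun l hl l' hl' x hx hx' => (huniq x).unique ⟨hl, hx⟩ ⟨hl', hx'⟩⟩, hcard⟩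
  · rintro ⟨hP, hcard⟩
    refine ⟨⟨fun l hl => ⟨hP.ne_nil l hl, hP.nodup l hl⟩, fun x => ?_⟩, hcard, hP.length_mem,
      by simp⟩
    obtain ⟨l, hl, hx⟩ := hP.exists_mem x trivial
    exact ⟨l, ⟨hl, hx⟩, fun l' ⟨hl', hx'⟩ => hP.eq_of_mem l' hl' l hl x hx' hx⟩

theorem srLah_zero_eq_ncard (S : Set ℕ) (n k : ℕ) :
    srLah S 0 n k = (listPartitions S (Set.univ : Set (Fin n)) k).ncard := by
  rw [srLah, srLahSet_zero, Nat.card_coe_set_eq]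

theorem finite_listPartitions [Fintype α] : (listPartitions S s k).Finite := by
  have hnodup : {l : List α | l.Nodup}.Finite :=
    Set.finite_coe_iff.1 (inferInstanceAs (Finite {l : List α // l.Nodup}))
  exact (hnodup.powerset.preimage Finset.coe_injective.injOn).subset
    fun _ hP l hl => hP.1.nodup l hl

theorem isListPartitionOf_image_map_iff {f : α → β} (hf : Function.Injective f)
    {P : Finset (List α)} :
    IsListPartitionOf S (f '' s) (P.image (List.map f)) ↔ IsListPartitionOf S s P := by
  have hmap := List.map_injective_iff.2 hf
  constructor
  · intro h
    refine ⟨?_, ?_, ?_, ?_, ?_, ?_⟩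
    · simpa using h.ne_nil
    · simpa [List.nodup_map_iff hf] using h.nodup
    · simpa using h.length_mem
    · simpa [hf.eq_iff] using h.mem_of_mem
    · simpa [hf.eq_iff] using h.exists_mem
    · intro l hl l' hl' x hx hx'
      exact hmap (h.eq_of_mem _ (mem_image_of_mem _ hl) _ (mem_image_of_mem _ hl') (f x)
        (List.mem_map_of_mem hx) (List.mem_map_of_mem hx'))
  · intro h
    refine ⟨?_, ?_, ?_, ?_, ?_, ?_⟩
    · simpa using h.ne_nil
    · simpa [List.nodup_map_iff hf] using h.nodup
    · simpa using h.length_mem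
    · simpa [hf.eq_iff] using h.mem_of_mem
    · simpa [hf.eq_iff] using h.exists_mem
    · simp only [forall_mem_image, List.forall_mem_map, List.mem_map_of_injective hf]
      intro l hl l' hl' x hx hx'
      rw [h.eq_of_mem l hl l' hl' x hx hx']

theorem listPartitions_image {f : α → β} (hf : Function.Injective f) :
    listPartitions S (f '' s) k = (fun P => P.image (List.map f)) '' listPartitions S s k := by
  have hmap := List.map_injective_iff.2 hf
  ext Q
  constructor
  · rintro ⟨hQ, hcard⟩
    have hQ_range : ↑Q ⊆ List.map f '' Set.univ := by
      intro m hm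
      rw [Set.image_univ, Set.range_list_map]
      exact fun x hx => Set.image_subset_range f s (hQ.mem_of_mem m hm x hx)
    obtain ⟨P, -, rfl⟩ := Finset.subset_set_image_iff.1 hQ_range
    exact ⟨P, ⟨(isListPartitionOf_image_map_iff hf).1 hQ,
      by rwa [card_image_of_injective _ hmap] at hcard⟩, rfl⟩
  · rintro ⟨P, ⟨hP, rfl⟩, rfl⟩
    exact ⟨(isListPartitionOf_image_map_iff hf).2 hP, card_image_of_injective _ hmap⟩

theorem ncard_listPartitions_image {f : α → β} (hf : Function.Injective f) :
    (listPartitions S (f '' s) k).ncard = (listPartitions S s k).ncard := by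
  rw [listPartitions_image hf,
    Set.ncard_image_of_injective _ (Finset.image_injective (List.map_injective_iff.2 hf))]

theorem ncard_listPartitions_univ_diff {n : ℕ} {l : List (Fin n)} (hl : l.Nodup) :
    (listPartitions S (Set.univ \ {x | x ∈ l}) k).ncard = srLah S 0 (n - l.length) k := by
  have hcard : l.toFinsetᶜ.card = n - l.length := by
    rw [card_compl, List.toFinset_card_of_nodup hl, Fintype.card_fin]
  have hdiff : Set.univ \ {x | x ∈ l} = l.toFinsetᶜ.orderEmbOfFin hcard '' Set.univ := by
    rw [Set.image_univ, Finset.range_orderEmbOfFin]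
    ext
    simp
  rw [hdiff, ncard_listPartitions_image (Finset.orderEmbOfFin _ hcard).injective,
    srLah_zero_eq_ncard]

theorem IsListPartitionOf.notMem_of_diff {P : Finset (List α)} {l : List α} (hl : l ≠ [])
    (hP : IsListPartitionOf S (s \ {x | x ∈ l}) P) : l ∉ P := by
  intro hlP
  obtain ⟨x, hx⟩ := List.exists_mem_of_ne_nil l hl
  exact (hP.mem_of_mem l hlP x hx).2 hx

theorem insert_mem_listPartitions {l : List α} {Q : Finset (List α)} (hl_ne : l ≠ [])
    (hl : l.Nodup) (hlS : l.length ∈ S) (hls : ∀ x ∈ l, x ∈ s)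
    (hQ : Q ∈ listPartitions S (s \ {x | x ∈ l}) k) :
    insert l Q ∈ listPartitions S s (k + 1) := by
  obtain ⟨hQ, hcard⟩ := hQ
  have hdisj : ∀ m ∈ Q, ∀ x ∈ m, x ∉ l := fun m hm x hx => (hQ.mem_of_mem m hm x hx).2
  refine ⟨⟨?_, ?_, ?_, ?_, ?_, ?_⟩,
    by rw [card_insert_of_notMem (hQ.notMem_of_diff hl_ne), hcard]⟩
  · simpa [hl_ne] using hQ.ne_nil
  · simpa [hl] using hQ.nodup
  · simpa [hlS] using hQ.length_mem
  · simp only [forall_mem_insert]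
    exact ⟨hls, fun m hm x hx => (hQ.mem_of_mem m hm x hx).1⟩
  · intro x hx
    by_cases hxl : x ∈ l
    · exact ⟨l, mem_insert_self _ _, hxl⟩
    · obtain ⟨m, hm, hxm⟩ := hQ.exists_mem x ⟨hx, hxl⟩
      exact ⟨m, mem_insert_of_mem hm, hxm⟩
  · intro m hm m' hm' x hx hx'
    rcases mem_insert.1 hm with rfl | hmQ <;> rcases mem_insert.1 hm' with rfl | hmQ'
    · rfl
    · exact absurd hx (hdisj _ hmQ' x hx')
    · exact absurd hx' (hdisj _ hmQ x hx)
    · exact hQ.eq_of_mem m hmQ m' hmQ' x hx hx'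

theorem erase_mem_listPartitions {P : Finset (List α)} {l : List α}
    (hP : P ∈ listPartitions S s (k + 1)) (hl : l ∈ P) :
    P.erase l ∈ listPartitions S (s \ {x | x ∈ l}) k := by
  obtain ⟨hP, hcard⟩ := hP
  refine ⟨⟨fun m hm => hP.ne_nil m (mem_of_mem_erase hm),
    fun m hm => hP.nodup m (mem_of_mem_erase hm),
    fun m hm => hP.length_mem m (mem_of_mem_erase hm), ?_, ?_,
    fun m hm m' hm' => hP.eq_of_mem m (mem_of_mem_erase hm) m' (mem_of_mem_erase hm')⟩,
    by rw [card_erase_of_mem hl, hcard, Nat.add_sub_cancel]⟩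
  · intro m hm x hx
    obtain ⟨hml, hm⟩ := mem_erase.1 hm
    exact ⟨hP.mem_of_mem m hm x hx, fun hxl => hml (hP.eq_of_mem m hm l hl x hx hxl)⟩
  · rintro x ⟨hx, hxl⟩
    obtain ⟨m, hm, hxm⟩ := hP.exists_mem x hx
    exact ⟨m, mem_erase.2 ⟨fun h => hxl (h ▸ hxm), hm⟩, hxm⟩

noncomputable def listPartitionsSuccEquiv {x₀ : α} (hx₀ : x₀ ∈ s) :
    (Σ l : {l : List α // l.Nodup ∧ x₀ ∈ l ∧ l.length ∈ S ∧ ∀ x ∈ l, x ∈ s},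
      listPartitions S (s \ {x | x ∈ l.1}) k) ≃ listPartitions S s (k + 1) := by
  refine Equiv.ofBijective
    (fun p => ⟨insert p.1.1 p.2.1, insert_mem_listPartitions (List.ne_nil_of_mem p.1.2.2.1)
      p.1.2.1 p.1.2.2.2.1 p.1.2.2.2.2 p.2.2⟩) ⟨?_, ?_⟩
  · rintro ⟨⟨l, hl⟩, Q, hQ⟩ ⟨⟨l', hl'⟩, Q', hQ'⟩ h
    have hPQ : insert l Q = insert l' Q' := congrArg Subtype.val h
    have hpart := (insert_mem_listPartitions (List.ne_nil_of_mem hl'.2.1) hl'.1 hl'.2.2.1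
      hl'.2.2.2 hQ').1
    obtain rfl : l = l' := hpart.eq_of_mem l (hPQ ▸ mem_insert_self l Q) l'
      (mem_insert_self l' Q') x₀ hl.2.1 hl'.2.1
    obtain rfl : Q = Q' := by
      simpa only [erase_insert (hQ.1.notMem_of_diff (List.ne_nil_of_mem hl.2.1)),
        erase_insert (hQ'.1.notMem_of_diff (List.ne_nil_of_mem hl.2.1))] using
        congrArg (·.erase l) hPQ
    rfl
  · rintro ⟨P, hP⟩
    obtain ⟨l, hl, hx₀l⟩ := hP.1.exists_mem x₀ hx₀
    exact ⟨⟨⟨l, hP.1.nodup l hl, hx₀l, hP.1.length_mem l hl, hP.1.mem_of_mem l hl⟩,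
      ⟨P.erase l, erase_mem_listPartitions hP hl⟩⟩, Subtype.ext (insert_erase hl)⟩

theorem Nat.add_one_descFactorial_eq (m j : ℕ) :
    (m + 1).descFactorial j = m.descFactorial j + j * m.descFactorial (j - 1) := by
  cases j with
  | zero => simp
  | succ t =>
    rw [Nat.succ_descFactorial_succ, Nat.descFactorial_succ, Nat.add_sub_cancel, ← add_mul]
    rcases le_or_gt t m with htm | htm
    · congr 1
      omega
    · simp [Nat.descFactorial_eq_zero_iff_lt.2 htm]

theorem ncard_setOf_embedding_mem_range [Fintype α] (x₀ : α) (j : ℕ) :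
    {f : Fin j ↪ α | x₀ ∈ Set.range f}.ncard =
      j * (Fintype.card α - 1).descFactorial (j - 1) := by
  have hcompl : {f : Fin j ↪ α | x₀ ∈ Set.range f}ᶜ.ncard =
      (Fintype.card α - 1).descFactorial j := by
    have e : ↥{f : Fin j ↪ α | x₀ ∈ Set.range f}ᶜ ≃ (Fin j ↪ {y : α // y ≠ x₀}) :=
      (Equiv.subtypeEquivRight fun f => by simp).trans (Equiv.codRestrict _ {y | y ≠ x₀})
    rw [← Nat.card_coe_set_eq, Nat.card_congr e, Nat.card_eq_fintype_card,
      Fintype.card_embedding_eq, Fintype.card_fin, Fintype.card_subtype_compl,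
      Fintype.card_subtype_eq]
  have hsplit := Set.ncard_add_ncard_compl {f : Fin j ↪ α | x₀ ∈ Set.range f}
  obtain ⟨m, hm⟩ : ∃ m, Fintype.card α = m + 1 :=
    Nat.exists_eq_add_one.2 (Fintype.card_pos_iff.2 ⟨x₀⟩)
  rw [hcompl, Nat.card_eq_fintype_card, Fintype.card_embedding_eq, Fintype.card_fin, hm,
    Nat.add_one_descFactorial_eq, Nat.add_sub_cancel] at hsplit
  rw [hm, Nat.add_sub_cancel]
  omega

theorem ncard_setOf_nodup_mem_length [Fintype α] (x₀ : α) (j : ℕ) :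
    {l : List α | l.Nodup ∧ x₀ ∈ l ∧ l.length = j}.ncard =
      j * (Fintype.card α - 1).descFactorial (j - 1) := by
  have himage : {l : List α | l.Nodup ∧ x₀ ∈ l ∧ l.length = j} =
      (fun f : Fin j ↪ α => List.ofFn f) '' {f | x₀ ∈ Set.range f} := by
    ext l
    constructor
    · rintro ⟨hl, hx₀, rfl⟩
      exact ⟨⟨l.get, List.nodup_iff_injective_get.1 hl⟩, by simpa [List.mem_iff_get] using hx₀,
        List.ofFn_get l⟩
    · rintro ⟨f, hf, rfl⟩
      exact ⟨List.nodup_ofFn.2 f.injective, (List.mem_ofFn' f x₀).2 hf, List.length_ofFn⟩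
  rw [himage, Set.ncard_image_of_injective _ fun f g h =>
    DFunLike.coe_injective (List.ofFn_injective h), ncard_setOf_embedding_mem_range]

theorem srLah_zero_succ_eq_sum (S : Set ℕ) {n : ℕ} (hn : 1 ≤ n) (k : ℕ) :
    srLah S 0 n (k + 1) = ∑ j ∈ (range (n + 1)).filter (· ∈ S),
      j * (n - 1).descFactorial (j - 1) * srLah S 0 (n - j) k := by
  let x₀ : Fin n := ⟨0, hn⟩
  let IsBlock (l : List (Fin n)) : Prop :=
    l.Nodup ∧ x₀ ∈ l ∧ l.length ∈ S ∧ ∀ x ∈ l, x ∈ Set.univ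
  let Block := Subtype IsBlock
  have : Finite Block := Finite.of_injective
    (Subtype.map (q := fun l : List (Fin n) => l.Nodup) id fun _ h => h.1)
    (Subtype.map_injective _ Function.injective_id)
  have := Fintype.ofFinite Block
  have : ∀ b : Block, Finite (listPartitions S (Set.univ \ {x | x ∈ b.1}) k) :=
    fun _ => finite_listPartitions.to_subtype
  have hsigma : srLah S 0 n (k + 1) = ∑ b : Block, srLah S 0 (n - b.1.length) k := by
    rw [srLah_zero_eq_ncard, ← Nat.card_coe_set_eq,
      ← Nat.card_congr (listPartitionsSuccEquiv (Set.mem_univ x₀)), Nat.card_sigma]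
    exact sum_congr rfl fun b _ => ncard_listPartitions_univ_diff b.2.1
  have hlength : ∀ b : Block, b.1.length ∈ (range (n + 1)).filter (· ∈ S) := fun b =>
    mem_filter.2 ⟨mem_range.2 (Nat.lt_succ_of_le (by simpa using b.2.1.length_le_card)), b.2.2.2.1⟩
  have hfiber : ∀ j ∈ (range (n + 1)).filter (· ∈ S),
      #{b : Block | b.1.length = j} = j * (n - 1).descFactorial (j - 1) := by
    intro j hj
    have e : {b : Block // b.1.length = j} ≃
        {l : List (Fin n) | l.Nodup ∧ x₀ ∈ l ∧ l.length = j} :=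
      (Equiv.subtypeSubtypeEquivSubtypeInter IsBlock (·.length = j)).trans
        (Equiv.subtypeEquivRight fun _ =>
          ⟨fun ⟨⟨hl, hx₀, _, _⟩, hlj⟩ => ⟨hl, hx₀, hlj⟩,
            fun ⟨hl, hx₀, hlj⟩ => ⟨⟨hl, hx₀, hlj ▸ (mem_filter.1 hj).2, fun _ _ => trivial⟩, hlj⟩⟩)
    rw [← Fintype.card_subtype, ← Nat.card_eq_fintype_card, Nat.card_congr e,
      Nat.card_coe_set_eq, ncard_setOf_nodup_mem_length, Fintype.card_fin]
  rw [hsigma, ← sum_fiberwise_of_maps_to fun b _ => hlength b]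
  refine sum_congr rfl fun j hj => ?_
  rw [sum_congr rfl fun b hb => by rw [(mem_filter.1 hb).2], sum_const, hfiber j hj, smul_eq_mul]

end ListPartitions

theorem sLah_recurrence_general (S : Set ℕ) (n k : ℕ)
    (hn : 1 ≤ n) (hk : 1 ≤ k) :
    (srLah S 0 n k : ℤ) =
      ∑ᶠ s ∈ S, (s : ℤ) * ((n - 1).descFactorial (s - 1) : ℤ) *
        srLahZ S 0 ((n : ℤ) - s) ((k : ℤ) - 1) := by
  obtain ⟨k, rfl⟩ := Nat.exists_eq_add_of_le' hk
  rw [finsum_mem_eq_sum_of_subset _ (t := (range (n + 1)).filter (· ∈ S)) ?support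
    fun s hs => (mem_filter.1 hs).2, srLah_zero_succ_eq_sum S hn, Nat.cast_sum]
  case support =>
    rintro s ⟨hsS, hs⟩
    refine mem_filter.2 ⟨mem_range.2 (Nat.lt_succ_of_le (not_lt.1 fun hns => hs ?_)), hsS⟩
    simp [Nat.descFactorial_eq_zero_iff_lt.2 (show n - 1 < s - 1 by omega)]
  refine sum_congr rfl fun s hs => ?_
  have hsn : s ≤ n := Nat.lt_succ_iff.1 (mem_range.1 (mem_filter.1 hs).1)
  have hns : ((n : ℤ) - s).toNat = n - s := by omega
  have hk1 : (((k + 1 : ℕ) : ℤ) - 1).toNat = k := by omega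
  rw [srLahZ, if_pos (by omega), hns, hk1]
  norm_cast

/-- the recurrence `L_S(n,k) = Σ_{s∈S} s·(n−1)_{s−1}·L_S(n−s,k−1)`. -/
theorem sLah_recurrence (S : Set ℕ) (hS : ∀ s ∈ S, 0 < s) (n k : ℕ)
    (hn : 1 ≤ n) (hk : 1 ≤ k) :
    (srLah S 0 n k : ℤ) =
      ∑ᶠ s ∈ S, (s : ℤ) * ((n - 1).descFactorial (s - 1) : ℤ) *
        srLahZ S 0 ((n : ℤ) - s) ((k : ℤ) - 1) :=
  sLah_recurrence_general S n k hn hk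
end

section
/- Let S be a set of positive integers, let S* = {s ∈ S : s−1 ∉ S} and S̄ = {s ∈ S : s+1 ∉ S}. Then for all integers n ≥ 1 and k ≥ 1, as an identity of integers, L_S(n,k) = (n+k−1)·L_S(n−1,k) + Σ_{s∈S*} C(n−1, s−1)·s!·L_S(n−s, k−1) − Σ_{s∈S̄} C(n−1, s)·(s+1)!·L_S(n−s−1, k−1), where both sums have only finitely many nonzero terms. -/
open Finset
open scoped Classical

/-!
Double count the pairs `(P, l)` with `P` an `S`-partition of an `n`-set into `k` lists and
`l ∈ P`, choosing `l` first: a list of length `s ∈ S` lies in `L_S(n - s, k - 1)` such `P`.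
Weighting each pair by the length of `l` gives
`n L_S(n, k) = ∑_{s ∈ S} s C(n, s) s! L_S(n - s, k - 1)`, i.e. `L_S(n, k) = ∑_{s ∈ S} c(s)` with
`c(s) = C(n - 1, s - 1) s! L_S(n - s, k - 1)`; weighting by the length plus one instead, for an
`(n - 1)`-set, gives `(n + k - 1) L_S(n - 1, k) = ∑_{s ∈ S} c(s + 1)`. Finally
`∑_{s ∈ S} c(s) - ∑_{s ∈ S*} c(s)` and `∑_{s ∈ S} c(s + 1) - ∑_{s ∈ S̄} c(s + 1)` are both the
sum of `c(s + 1)` over the `s` with `s, s + 1 ∈ S`.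
-/

open scoped Nat

namespace SLah

variable {α β : Type*}

def IsListPartitionOn (A : Finset α) (P : Finset (List α)) : Prop :=
  (∀ l ∈ P, l ≠ [] ∧ l.Nodup ∧ ∀ x ∈ l, x ∈ A) ∧ ∀ x ∈ A, ∃! l, l ∈ P ∧ x ∈ l

theorem isListPartitionOn_empty_iff {P : Finset (List α)} :
    IsListPartitionOn ∅ P ↔ P = ∅ := by
  refine ⟨fun hP => Finset.eq_empty_of_forall_notMem fun l hl => ?_, ?_⟩
  · obtain ⟨hne, -, hsub⟩ := hP.1 l hl
    obtain ⟨x, hx⟩ := List.exists_mem_of_ne_nil l hne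
    exact Finset.notMem_empty x (hsub x hx)
  · rintro rfl
    simp [IsListPartitionOn]

theorem IsListPartitionOn.image [DecidableEq β] {A : Finset α} {B : Finset β}
    {P : Finset (List α)} {g : α → β} {h : β → α} (hP : IsListPartitionOn A P)
    (hg : Set.MapsTo g A B) (hh : Set.MapsTo h B A) (hinv : Set.InvOn h g A B) :
    IsListPartitionOn B (P.image (List.map g)) := by
  obtain ⟨hlists, hcover⟩ := hP
  constructor
  · simp only [Finset.mem_image, forall_exists_index, and_imp]
    rintro _ l hl rfl
    obtain ⟨hne, hnd, hsub⟩ := hlists l hl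
    refine ⟨by simpa using hne, hnd.map_on fun x hx y hy hxy => ?_, ?_⟩
    · rw [← hinv.1 (hsub x hx), hxy, hinv.1 (hsub y hy)]
    · simpa using fun x hx => hg (hsub x hx)
  · intro y hy
    obtain ⟨l, ⟨hlP, hyl⟩, huniq⟩ := hcover (h y) (hh hy)
    refine ⟨l.map g, ⟨mem_image_of_mem _ hlP, hinv.2 hy ▸ List.mem_map_of_mem hyl⟩, ?_⟩
    simp only [Finset.mem_image, and_imp, forall_exists_index]
    rintro _ l' hl' rfl hyl'
    obtain ⟨x, hx, rfl⟩ := List.mem_map.mp hyl'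
    rw [huniq l' ⟨hl', by rwa [hinv.1 ((hlists l' hl').2.2 x hx)]⟩]

theorem map_map_of_leftInvOn {A : Finset α} {g : α → β} {h : β → α}
    (hinv : Set.LeftInvOn h g A) {l : List α} (hl : ∀ x ∈ l, x ∈ A) : (l.map g).map h = l := by
  simpa [Function.comp_def] using List.map_congr_left fun x hx => hinv (hl x hx)

section DecidableEq

variable [DecidableEq α] {S : Set ℕ} {A : Finset α} {k : ℕ} {l : List α} {P : Finset (List α)}

theorem IsListPartitionOn.sum_length (hP : IsListPartitionOn A P) : ∑ l ∈ P, l.length = #A := by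
  obtain ⟨hlists, hcover⟩ := hP
  have hA : A = P.biUnion List.toFinset := by
    ext x
    simp only [mem_biUnion, List.mem_toFinset]
    exact ⟨fun hx => (hcover x hx).exists, fun ⟨l, hl, hxl⟩ => (hlists l hl).2.2 x hxl⟩
  have hdisj : (P : Set (List α)).PairwiseDisjoint List.toFinset := by
    intro l hl l' hl' hne
    refine Finset.disjoint_left.mpr fun x hx hx' => hne ?_
    rw [List.mem_toFinset] at hx hx'
    exact (hcover x ((hlists l hl).2.2 x hx)).unique ⟨hl, hx⟩ ⟨hl', hx'⟩
  rw [hA, card_biUnion hdisj]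
  exact Finset.sum_congr rfl fun l hl => (List.toFinset_card_of_nodup (hlists l hl).2.1).symm

theorem IsListPartitionOn.erase (hP : IsListPartitionOn A P) (hl : l ∈ P) :
    IsListPartitionOn (A \ l.toFinset) (P.erase l) := by
  obtain ⟨hlists, hcover⟩ := hP
  have hsame {l' x} (hl' : l' ∈ P) (hxl' : x ∈ l') (hxl : x ∈ l) : l' = l :=
    (hcover x ((hlists l hl).2.2 x hxl)).unique ⟨hl', hxl'⟩ ⟨hl, hxl⟩
  constructor
  · intro l' hl'
    obtain ⟨hne, hl'P⟩ := Finset.mem_erase.mp hl'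
    obtain ⟨hne', hnd, hsub⟩ := hlists l' hl'P
    exact ⟨hne', hnd, fun x hx => mem_sdiff.mpr
      ⟨hsub x hx, fun hxl => hne (hsame hl'P hx (List.mem_toFinset.mp hxl))⟩⟩
  · intro x hx
    obtain ⟨hxA, hxl⟩ := mem_sdiff.mp hx
    obtain ⟨l', ⟨hl'P, hxl'⟩, huniq⟩ := hcover x hxA
    refine ⟨l', ⟨Finset.mem_erase.mpr ⟨?_, hl'P⟩, hxl'⟩,
      fun l'' h => huniq l'' ⟨Finset.mem_of_mem_erase h.1, h.2⟩⟩
    rintro rfl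
    exact hxl (List.mem_toFinset.mpr hxl')

theorem IsListPartitionOn.notMem (hP : IsListPartitionOn (A \ l.toFinset) P) (hl : l ≠ []) :
    l ∉ P := by
  intro hlP
  obtain ⟨x, hx⟩ := List.exists_mem_of_ne_nil l hl
  exact (mem_sdiff.mp ((hP.1 l hlP).2.2 x hx)).2 (List.mem_toFinset.mpr hx)

theorem IsListPartitionOn.insert (hP : IsListPartitionOn (A \ l.toFinset) P) (hl : l ≠ [])
    (hnd : l.Nodup) (hlA : ∀ x ∈ l, x ∈ A) : IsListPartitionOn A (insert l P) := by
  obtain ⟨hlists, hcover⟩ := hP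
  have hnot {l' x} (hl' : l' ∈ P) (hxl' : x ∈ l') : x ∉ l := fun hxl =>
    (mem_sdiff.mp ((hlists l' hl').2.2 x hxl')).2 (List.mem_toFinset.mpr hxl)
  constructor
  · simp only [Finset.mem_insert, forall_eq_or_imp]
    exact ⟨⟨hl, hnd, hlA⟩, fun l' hl' => ⟨(hlists l' hl').1, (hlists l' hl').2.1,
      fun x hx => (mem_sdiff.mp ((hlists l' hl').2.2 x hx)).1⟩⟩
  · intro x hx
    by_cases hxl : x ∈ l
    · refine ⟨l, ⟨Finset.mem_insert_self l P, hxl⟩, fun l' ⟨hl', hxl'⟩ => ?_⟩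
      rcases Finset.mem_insert.mp hl' with rfl | hl'P
      · rfl
      · exact absurd hxl (hnot hl'P hxl')
    · obtain ⟨l', ⟨hl'P, hxl'⟩, huniq⟩ :=
        hcover x (mem_sdiff.mpr ⟨hx, fun h => hxl (List.mem_toFinset.mp h)⟩)
      refine ⟨l', ⟨Finset.mem_insert_of_mem hl'P, hxl'⟩, fun l'' ⟨hl'', hxl''⟩ => ?_⟩
      rcases Finset.mem_insert.mp hl'' with rfl | hl''P
      · exact absurd hxl'' hxl
      · exact huniq l'' ⟨hl''P, hxl''⟩

noncomputable def nodupLists (A : Finset α) : Finset (List α) :=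
  A.powerset.biUnion fun B => B.toList.permutations.toFinset

theorem mem_nodupLists : l ∈ nodupLists A ↔ l.Nodup ∧ ∀ x ∈ l, x ∈ A := by
  simp only [nodupLists, mem_biUnion, Finset.mem_powerset, List.mem_toFinset,
    List.mem_permutations]
  constructor
  · rintro ⟨B, hBA, hperm⟩
    exact ⟨hperm.nodup_iff.mpr B.nodup_toList,
      fun x hx => hBA (Finset.mem_toList.mp (hperm.mem_iff.mp hx))⟩
  · rintro ⟨hnd, hA⟩
    exact ⟨l.toFinset, fun x hx => hA x (List.mem_toFinset.mp hx),
      (List.toFinset_toList hnd).symm⟩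

theorem sum_nodupLists (A : Finset α) (g : ℕ → ℕ) :
    ∑ l ∈ nodupLists A, g l.length = ∑ s ∈ range (#A + 1), (#A).choose s * s ! * g s := by
  have hdisj : (A.powerset : Set (Finset α)).PairwiseDisjoint
      fun B => B.toList.permutations.toFinset := by
    intro B _ B' _ hne
    refine Finset.disjoint_left.mpr fun l hl hl' => hne ?_
    rw [List.mem_toFinset, List.mem_permutations] at hl hl'
    exact Finset.perm_toList.mp (hl.symm.trans hl')
  have hperms (B : Finset α) :
      ∑ l ∈ B.toList.permutations.toFinset, g l.length = (#B)! * g #B := by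
    rw [Finset.sum_congr rfl fun l hl => by
        rw [(List.mem_permutations.mp (List.mem_toFinset.mp hl)).length_eq, B.length_toList],
      sum_const, List.toFinset_card_of_nodup (List.nodup_permutations _ B.nodup_toList),
      List.length_permutations, B.length_toList, smul_eq_mul]
  rw [nodupLists, sum_biUnion hdisj, Finset.sum_congr rfl fun B _ => hperms B,
    Finset.sum_powerset_apply_card (fun s => s ! * g s)]
  simp only [smul_eq_mul, mul_assoc]

noncomputable def listPartitions (S : Set ℕ) (A : Finset α) (k : ℕ) :
    Finset (Finset (List α)) :=
  {P ∈ (nodupLists A).powerset | IsListPartitionOn A P ∧ #P = k ∧ ∀ l ∈ P, l.length ∈ S}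

theorem mem_listPartitions :
    P ∈ listPartitions S A k ↔ IsListPartitionOn A P ∧ #P = k ∧ ∀ l ∈ P, l.length ∈ S := by
  rw [listPartitions, mem_filter, Finset.mem_powerset, and_iff_right_iff_imp]
  exact fun hP l hl => mem_nodupLists.mpr ⟨(hP.1.1 l hl).2.1, (hP.1.1 l hl).2.2⟩

theorem card_listPartitions_empty (S : Set ℕ) (k : ℕ) :
    #(listPartitions S (∅ : Finset α) k) = if k = 0 then 1 else 0 := by
  have : listPartitions S (∅ : Finset α) k = if k = 0 then {∅} else ∅ := by
    ext P
    rw [mem_listPartitions, isListPartitionOn_empty_iff]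
    constructor
    · rintro ⟨rfl, rfl, -⟩
      simp
    · intro hP
      split_ifs at hP with hk
      · simp [mem_singleton.mp hP, hk]
      · simp at hP
  split_ifs at this ⊢ <;> simp [this]

theorem srLah_eq_card_listPartitions (S : Set ℕ) (n k : ℕ) :
    srLah S 0 n k = #(listPartitions S (univ : Finset (Fin n)) k) := by
  have : srLahSet S 0 n k = listPartitions S (univ : Finset (Fin n)) k := by
    ext P
    simp [srLahSet, mem_listPartitions, IsListPartition, IsListPartitionOn]
  rw [srLah, this, Nat.card_coe_set_eq, Set.ncard_coe_finset]

section Transport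

variable [DecidableEq β] {B : Finset β} {g : α → β} {h : β → α}

theorem image_map_image_map (hinv : Set.LeftInvOn h g A) (hP : ∀ l ∈ P, ∀ x ∈ l, x ∈ A) :
    (P.image (List.map g)).image (List.map h) = P := by
  rw [Finset.image_image]
  exact (Finset.image_congr fun l hl => map_map_of_leftInvOn hinv (hP l hl)).trans P.image_id

theorem mapsTo_image_map_listPartitions (hg : Set.MapsTo g A B) (hh : Set.MapsTo h B A)
    (hinv : Set.InvOn h g A B) :
    Set.MapsTo (Finset.image (List.map g)) (listPartitions S A k) (listPartitions S B k) := by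
  intro P hP
  obtain ⟨hpart, hcard, hlen⟩ := mem_listPartitions.mp hP
  refine mem_listPartitions.mpr ⟨hpart.image hg hh hinv, ?_, by simpa using hlen⟩
  rw [card_image_of_injOn fun l hl l' hl' he => ?_, hcard]
  rw [← map_map_of_leftInvOn hinv.1 (hpart.1 l hl).2.2,
    ← map_map_of_leftInvOn hinv.1 (hpart.1 l' hl').2.2, he]

theorem card_listPartitions_congr (hg : Set.MapsTo g A B) (hh : Set.MapsTo h B A)
    (hinv : Set.InvOn h g A B) : #(listPartitions S A k) = #(listPartitions S B k) := by
  refine card_nbij' _ _ (mapsTo_image_map_listPartitions hg hh hinv)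
    (mapsTo_image_map_listPartitions hh hg hinv.symm) (fun P hP => ?_) fun Q hQ => ?_
  · exact image_map_image_map hinv.1 fun l hl => ((mem_listPartitions.mp hP).1.1 l hl).2.2
  · exact image_map_image_map hinv.2 fun l hl => ((mem_listPartitions.mp hQ).1.1 l hl).2.2

end Transport

theorem card_listPartitions (S : Set ℕ) (A : Finset α) (k : ℕ) :
    #(listPartitions S A k) = srLah S 0 #A k := by
  rw [srLah_eq_card_listPartitions]
  rcases A.eq_empty_or_nonempty with rfl | hA
  · rw [card_listPartitions_empty, card_empty, univ_eq_empty, card_listPartitions_empty]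
  set e := A.equivFin
  refine card_listPartitions_congr (h := fun i => (e.symm i : α))
    (g := fun x => if hx : x ∈ A then e ⟨x, hx⟩ else ⟨0, hA.card_pos⟩)
    (fun _ _ => mem_univ _) (fun i _ => (e.symm i).2) ⟨fun x hx => ?_, fun i _ => ?_⟩
  · simp [Finset.mem_coe.mp hx]
  · simp

theorem card_filter_mem_listPartitions (hl : l ≠ []) (hnd : l.Nodup) (hlA : ∀ x ∈ l, x ∈ A)
    (hlS : l.length ∈ S) :
    #{P ∈ listPartitions S A (k + 1) | l ∈ P} = #(listPartitions S (A \ l.toFinset) k) := by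
  refine card_nbij' (fun P => P.erase l) (insert l) (fun P hP => ?_) (fun Q hQ => ?_)
    (fun P hP => Finset.insert_erase (mem_filter.mp hP).2) fun Q hQ => ?_
  · obtain ⟨hP, hlP⟩ := mem_filter.mp hP
    obtain ⟨hpart, hcard, hlen⟩ := mem_listPartitions.mp hP
    exact mem_listPartitions.mpr ⟨hpart.erase hlP, by simp [card_erase_of_mem hlP, hcard],
      fun l' hl' => hlen l' (Finset.mem_of_mem_erase hl')⟩
  · obtain ⟨hpart, hcard, hlen⟩ := mem_listPartitions.mp hQ
    refine mem_filter.mpr ⟨mem_listPartitions.mpr ⟨hpart.insert hl hnd hlA, ?_, ?_⟩,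
      Finset.mem_insert_self l Q⟩
    · rw [card_insert_of_notMem (hpart.notMem hl), hcard]
    · simpa [hlS] using hlen
  · exact Finset.erase_insert ((mem_listPartitions.mp hQ).1.notMem hl)

theorem card_filter_mem_listPartitions_eq_ite (hS : 0 ∉ S) (hl : l ∈ nodupLists A) :
    #{P ∈ listPartitions S A (k + 1) | l ∈ P} =
      if l.length ∈ S then srLah S 0 (#A - l.length) k else 0 := by
  obtain ⟨hnd, hlA⟩ := mem_nodupLists.mp hl
  split_ifs with hlS
  · have hl : l ≠ [] := by rintro rfl; exact hS hlS
    rw [card_filter_mem_listPartitions hl hnd hlA hlS, card_listPartitions,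
      card_sdiff_of_subset fun x hx => hlA x (List.mem_toFinset.mp hx),
      List.toFinset_card_of_nodup hnd]
  · refine card_eq_zero.mpr (filter_eq_empty_iff.mpr fun P hP hlP => hlS ?_)
    exact (mem_listPartitions.mp hP).2.2 l hlP

theorem sum_sum_listPartitions (hS : 0 ∉ S) (A : Finset α) (k : ℕ) (f : ℕ → ℕ) :
    ∑ P ∈ listPartitions S A (k + 1), ∑ l ∈ P, f l.length =
      ∑ s ∈ range (#A + 1), (#A).choose s * s ! *
        (f s * if s ∈ S then srLah S 0 (#A - s) k else 0) := by
  calc ∑ P ∈ listPartitions S A (k + 1), ∑ l ∈ P, f l.length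
      = ∑ l ∈ nodupLists A, ∑ P ∈ listPartitions S A (k + 1) with l ∈ P, f l.length := by
        refine Finset.sum_comm' fun P l => ?_
        rw [mem_filter]
        exact iff_self_and.mpr fun ⟨hP, hlP⟩ => (Finset.mem_powerset.mp (mem_filter.mp hP).1) hlP
    _ = ∑ l ∈ nodupLists A, f l.length *
          if l.length ∈ S then srLah S 0 (#A - l.length) k else 0 := by
        refine Finset.sum_congr rfl fun l hl => ?_
        rw [sum_const, card_filter_mem_listPartitions_eq_ite hS hl, smul_eq_mul, mul_comm]
    _ = _ := sum_nodupLists A fun s => f s * if s ∈ S then srLah S 0 (#A - s) k else 0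

end DecidableEq

variable {S : Set ℕ}

theorem srLah_add_one_add_one (hS : 0 ∉ S) (m k : ℕ) :
    srLah S 0 (m + 1) (k + 1) = ∑ s ∈ range (m + 2),
      if s ∈ S then m.choose (s - 1) * s ! * srLah S 0 (m + 1 - s) k else 0 := by
  have hcount := sum_sum_listPartitions hS (univ : Finset (Fin (m + 1))) k id
  simp only [id, card_univ, Fintype.card_fin] at hcount
  rw [Finset.sum_congr rfl fun P hP => (mem_listPartitions.mp hP).1.sum_length, sum_const,
    ← srLah_eq_card_listPartitions, card_univ, Fintype.card_fin, smul_eq_mul] at hcount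
  refine Nat.eq_of_mul_eq_mul_left m.succ_pos ?_
  rw [mul_comm, hcount, mul_sum]
  refine Finset.sum_congr rfl fun s _ => ?_
  split_ifs with hs
  · obtain ⟨t, rfl⟩ := Nat.exists_eq_add_one_of_ne_zero (ne_of_mem_of_not_mem hs hS)
    calc (m + 1).choose (t + 1) * (t + 1)! * ((t + 1) * srLah S 0 (m + 1 - (t + 1)) k)
        = (m + 1).choose (t + 1) * (t + 1) * ((t + 1)! * srLah S 0 (m - t) k) := by
          rw [Nat.add_sub_add_right]; ring
      _ = (m + 1) * (m.choose (t + 1 - 1) * (t + 1)! * srLah S 0 (m + 1 - (t + 1)) k) := by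
          rw [← Nat.add_one_mul_choose_eq, Nat.add_sub_cancel, Nat.add_sub_add_right]; ring
  · simp

theorem add_mul_srLah (hS : 0 ∉ S) (m k : ℕ) :
    (m + (k + 1)) * srLah S 0 m (k + 1) = ∑ s ∈ range (m + 1),
      if s ∈ S then m.choose s * (s + 1)! * srLah S 0 (m - s) k else 0 := by
  have hcount := sum_sum_listPartitions hS (univ : Finset (Fin m)) k (· + 1)
  simp only [card_univ, Fintype.card_fin] at hcount
  rw [Finset.sum_congr rfl fun P hP => by
      rw [sum_add_distrib, (mem_listPartitions.mp hP).1.sum_length, sum_const,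
        (mem_listPartitions.mp hP).2.1, card_univ, Fintype.card_fin, smul_eq_mul, mul_one],
    sum_const, ← srLah_eq_card_listPartitions, smul_eq_mul] at hcount
  rw [mul_comm, hcount]
  refine Finset.sum_congr rfl fun s _ => ?_
  split_ifs
  · rw [Nat.factorial_succ]; ring
  · simp

theorem srLahZ_natCast (S : Set ℕ) (r a b : ℕ) : srLahZ S r a b = srLah S r a b := by
  simp [srLahZ]

/-- `c(s)` of the recurrence for `n = m + 1` elements and `k + 1` lists. -/
noncomputable def lahTerm (S : Set ℕ) (m k s : ℕ) : ℤ :=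
  m.choose (s - 1) * s ! * srLahZ S 0 ((m : ℤ) + 1 - s) k

theorem lahTerm_of_le {m k s : ℕ} (hs : s ≤ m + 1) :
    lahTerm S m k s = (m.choose (s - 1) * s ! * srLah S 0 (m + 1 - s) k : ℕ) := by
  simp [lahTerm, ← srLahZ_natCast, Nat.cast_sub hs]

theorem lahTerm_of_lt {m k s : ℕ} (hs : m + 1 < s) : lahTerm S m k s = 0 := by
  simp [lahTerm, Nat.choose_eq_zero_of_lt (by omega : m < s - 1)]

theorem natCast_srLah_add_one_add_one (hS : 0 ∉ S) (m k : ℕ) :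
    (srLah S 0 (m + 1) (k + 1) : ℤ) = ∑ s ∈ range (m + 2), S.indicator (lahTerm S m k) s := by
  rw [srLah_add_one_add_one hS]
  push_cast
  refine sum_congr rfl fun s hs => ?_
  rw [Set.indicator_apply, lahTerm_of_le (Nat.lt_succ_iff.mp (mem_range.mp hs))]
  push_cast
  rfl

theorem natCast_add_mul_srLah (hS : 0 ∉ S) (m k : ℕ) :
    ((m + (k + 1) : ℕ) * srLah S 0 m (k + 1) : ℤ) =
      ∑ s ∈ range (m + 1), S.indicator (fun s => lahTerm S m k (s + 1)) s := by
  rw [← Nat.cast_mul, add_mul_srLah hS]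
  push_cast
  refine sum_congr rfl fun s hs => ?_
  rw [Set.indicator_apply, lahTerm_of_le (s := s + 1) (Nat.succ_le_succ (mem_range_succ_iff.mp hs)),
    Nat.add_sub_cancel, Nat.add_sub_add_right]
  push_cast
  rfl

theorem finsum_mem_eq_sum_range_indicator {M : Type*} [AddCommMonoid M] {T : Set ℕ}
    {f : ℕ → M} {N : ℕ} (hf : ∀ s, N ≤ s → f s = 0) :
    ∑ᶠ s ∈ T, f s = ∑ s ∈ range N, T.indicator f s := by
  rw [finsum_mem_def]
  exact finsum_eq_sum_of_support_subset _ fun s hs =>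
    mem_range.mpr (lt_of_not_ge fun h => hs (Set.indicator_apply_eq_zero.mpr fun _ => hf s h))

theorem sum_range_indicator_eq_shift {M : Type*} [AddCommGroup M] {T : Set ℕ} (hT : 0 ∉ T)
    (g : ℕ → M) (N : ℕ) :
    ∑ s ∈ range (N + 1), T.indicator g s =
      ∑ s ∈ range N, T.indicator (fun s => g (s + 1)) s +
      ∑ s ∈ range (N + 1), {s ∈ T | s - 1 ∉ T}.indicator g s -
      ∑ s ∈ range N, {s ∈ T | s + 1 ∉ T}.indicator (fun s => g (s + 1)) s := by
  have hshift : ∑ s ∈ range (N + 1), (T.indicator g s - {s ∈ T | s - 1 ∉ T}.indicator g s) =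
      ∑ s ∈ range N, (T.indicator (fun s => g (s + 1)) s -
        {s ∈ T | s + 1 ∉ T}.indicator (fun s => g (s + 1)) s) := by
    rw [sum_range_succ']
    refine (add_eq_left.mpr (by simp [hT])).trans (sum_congr rfl fun s _ => ?_)
    by_cases hs : s ∈ T <;> by_cases hs' : s + 1 ∈ T <;> simp [hs, hs']
  rw [sum_sub_distrib, sum_sub_distrib] at hshift
  rw [← sub_add_cancel (∑ s ∈ range (N + 1), _) (∑ s ∈ range (N + 1), _), hshift]
  abel

end SLah

open SLah

/-- recurrence for the S-Lah numbers via the sets `S*` and `S̄`. -/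
theorem sLah_recurrence_star_bar (S : Set ℕ) (hS : ∀ s ∈ S, 0 < s) (n k : ℕ)
    (hn : 1 ≤ n) (hk : 1 ≤ k) :
    (srLah S 0 n k : ℤ) =
      ((n : ℤ) + k - 1) * srLahZ S 0 ((n : ℤ) - 1) k +
      (∑ᶠ s ∈ {s ∈ S | s - 1 ∉ S}, ((n - 1).choose (s - 1) : ℤ) * (s.factorial : ℤ) *
        srLahZ S 0 ((n : ℤ) - s) ((k : ℤ) - 1)) -
      ∑ᶠ s ∈ {s ∈ S | s + 1 ∉ S}, ((n - 1).choose s : ℤ) * ((s + 1).factorial : ℤ) *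
        srLahZ S 0 ((n : ℤ) - s - 1) ((k : ℤ) - 1) := by
  have hS0 : 0 ∉ S := fun h => (hS 0 h).false
  obtain ⟨m, rfl⟩ := Nat.exists_eq_add_of_le' hn
  obtain ⟨j, rfl⟩ := Nat.exists_eq_add_of_le' hk
  simp only [Nat.add_sub_cancel, Nat.cast_add, Nat.cast_one, add_sub_cancel_right]
  have hstar : ∑ᶠ s ∈ {s ∈ S | s - 1 ∉ S},
      (m.choose (s - 1) : ℤ) * (s ! : ℤ) * srLahZ S 0 ((m : ℤ) + 1 - s) j =
      ∑ s ∈ range (m + 2), {s ∈ S | s - 1 ∉ S}.indicator (lahTerm S m j) s :=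
    finsum_mem_eq_sum_range_indicator fun _ hs => lahTerm_of_lt hs
  have hbar : ∑ᶠ s ∈ {s ∈ S | s + 1 ∉ S},
      (m.choose s : ℤ) * ((s + 1)! : ℤ) * srLahZ S 0 ((m : ℤ) + 1 - s - 1) j =
      ∑ s ∈ range (m + 1), {s ∈ S | s + 1 ∉ S}.indicator (fun s => lahTerm S m j (s + 1)) s := by
    rw [← finsum_mem_eq_sum_range_indicator fun _ hs => lahTerm_of_lt (by omega)]
    exact finsum_mem_congr rfl fun s _ => by simp [lahTerm, sub_add_eq_sub_sub]
  rw [hstar, hbar, show ((m : ℤ) + 1 + (j + 1) - 1) = ((m + (j + 1) : ℕ) : ℤ) by push_cast; ring,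
    show ((j : ℤ) + 1) = ((j + 1 : ℕ) : ℤ) by push_cast; rfl, srLahZ_natCast,
    natCast_add_mul_srLah hS0, natCast_srLah_add_one_add_one hS0]
  exact sum_range_indicator_eq_shift hS0 (lahTerm S m j) (m + 1)
end

section
/- Let S be a set of positive integers and let n ≥ 1, k ≥ 1, r ≥ 1 be integers. Then L_{S,r}(n+1, k) = L_{S,r+1}(n, k−1) + r·Σ_{s∈S} s!·C(n, s−2)·L_{S,r−1}(n−s+2, k), where the sum has only finitely many nonzero terms and C(n, s−2) = 0 when s−2 < 0 or s−2 > n. -/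
open Finset
open scoped Classical

/-!
Count more generally the partitions of a finite set `A` into `m` lists each of which meets a set
`D` of marked elements at most once. Up to relabelling this number depends only on `#A`,
`#(A ∩ D)` and `m`, and `L_{S,r}(n,k)` is the case `#A = n + r`, `#(A ∩ D) = r`, `m = k + r`.

In a partition counted by `L_{S,r}(n+1,k)` look at the list containing the first unmarked
element `x`. If it contains no marked element, marking `x` as well gives exactly the partitions
counted by `L_{S,r+1}(n,k-1)`. Otherwise it contains exactly one of the `r` marked elements;
deleting it leaves a partition of `n + 2 - s` unmarked and `r - 1` marked elements into
`k + r - 1` lists, where `s` is its length, and there are `r * C(n, s-2) * s!` such lists.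
-/

open scoped Nat

namespace ListPartition

variable {α β : Type*}

variable (α) in
def nodupLists [Fintype α] : Finset (List α) :=
  univ.map (Function.Embedding.subtype List.Nodup)

@[simp]
lemma mem_nodupLists [Fintype α] {l : List α} : l ∈ nodupLists α ↔ l.Nodup := by
  simp [nodupLists]

variable [DecidableEq α]

structure IsBlock (S : Set ℕ) (A D : Finset α) (l : List α) : Prop where
  ne_nil : l ≠ []
  nodup : l.Nodup
  length_mem : l.length ∈ S
  subset : ∀ a ∈ l, a ∈ A
  card_inter_le : #(l.toFinset ∩ D) ≤ 1

lemma isBlock_iff {S : Set ℕ} {A D : Finset α} {l : List α} :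
    IsBlock S A D l ↔
      l ≠ [] ∧ l.Nodup ∧ l.length ∈ S ∧ (∀ a ∈ l, a ∈ A) ∧ #(l.toFinset ∩ D) ≤ 1 :=
  ⟨fun h => ⟨h.1, h.2, h.3, h.4, h.5⟩, fun h => ⟨h.1, h.2.1, h.2.2.1, h.2.2.2.1, h.2.2.2.2⟩⟩

noncomputable def blockPartitions [Fintype α] (S : Set ℕ) (A D : Finset α) (m : ℕ) :
    Finset (Finset (List α)) :=
  {P ∈ {l ∈ nodupLists α | IsBlock S A D l}.powerset |
    (∀ a ∈ A, ∃! l, l ∈ P ∧ a ∈ l) ∧ #P = m}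

noncomputable def crossingBlocks [Fintype α] (S : Set ℕ) (A D : Finset α) (x : α) :
    Finset (List α) :=
  {l ∈ nodupLists α | IsBlock S A D l ∧ x ∈ l ∧ ¬Disjoint l.toFinset D}

section Blocks

variable {S : Set ℕ} {A D : Finset α} {x : α} {l : List α}

lemma IsBlock.mono {A' : Finset α} (hl : IsBlock S A D l) (hA : A ⊆ A') : IsBlock S A' D l :=
  { hl with subset := fun a ha => hA (hl.subset a ha) }

lemma IsBlock.card_inter_eq_one (hl : IsBlock S A D l) (hD : ¬Disjoint l.toFinset D) :
    #(l.toFinset ∩ D) = 1 :=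
  le_antisymm hl.card_inter_le (card_pos.2 (not_disjoint_iff_nonempty_inter.1 hD))

lemma isBlock_insert_iff (hx : x ∉ D) :
    IsBlock S A (insert x D) l ↔ IsBlock S A D l ∧ (x ∈ l → Disjoint l.toFinset D) := by
  by_cases hxl : x ∈ l
  · have hcard : #(l.toFinset ∩ insert x D) = #(l.toFinset ∩ D) + 1 := by
      rw [inter_insert_of_mem (List.mem_toFinset.2 hxl), card_insert_of_notMem (by simp [hx])]
    simp only [isBlock_iff, hcard, hxl, true_imp_iff, disjoint_iff_inter_eq_empty, ← card_eq_zero]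
    grind
  · simp [isBlock_iff, hxl, inter_insert_of_notMem (mt List.mem_toFinset.1 hxl)]

variable [Fintype α]

lemma mem_crossingBlocks :
    l ∈ crossingBlocks S A D x ↔ IsBlock S A D l ∧ x ∈ l ∧ ¬Disjoint l.toFinset D := by
  simp only [crossingBlocks, mem_filter, mem_nodupLists, and_iff_right_iff_imp]
  exact fun h => h.1.nodup

lemma card_inter_eq_one_of_mem_crossingBlocks (hl : l ∈ crossingBlocks S A D x) :
    #(l.toFinset ∩ D) = 1 :=
  (mem_crossingBlocks.1 hl).1.card_inter_eq_one (mem_crossingBlocks.1 hl).2.2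

lemma length_le_of_mem_crossingBlocks (hl : l ∈ crossingBlocks S A D x) :
    l.length ≤ #(A \ D) + 1 := by
  have hblock := (mem_crossingBlocks.1 hl).1
  have hsub : l.toFinset \ D ⊆ A \ D :=
    sdiff_subset_sdiff (fun a ha => hblock.subset a (List.mem_toFinset.1 ha)) le_rfl
  have hsplit := card_inter_add_card_sdiff l.toFinset D
  rw [List.toFinset_card_of_nodup hblock.nodup, card_inter_eq_one_of_mem_crossingBlocks hl]
    at hsplit
  have := card_le_card hsub
  omega

lemma two_le_length_of_mem_crossingBlocks (hx : x ∉ D) (hl : l ∈ crossingBlocks S A D x) :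
    2 ≤ l.length := by
  have hsub : insert x (l.toFinset ∩ D) ⊆ l.toFinset :=
    insert_subset (List.mem_toFinset.2 (mem_crossingBlocks.1 hl).2.1) inter_subset_left
  have := card_le_card hsub
  rwa [card_insert_of_notMem (fun h => hx (mem_inter.1 h).2),
    card_inter_eq_one_of_mem_crossingBlocks hl,
    List.toFinset_card_of_nodup (mem_crossingBlocks.1 hl).1.nodup] at this

end Blocks

lemma exists_injective_fin_image_eq {A D : Finset α} {n r : ℕ} (hA : #A = n + r)
    (hD : #(A ∩ D) = r) :
    ∃ f : Fin (n + r) → α, Function.Injective f ∧ univ.image f = A ∧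
      ∀ i, f i ∈ D ↔ (i : ℕ) < r := by
  set L := (A ∩ D).toList ++ (A \ D).toList
  have hlen : L.length = n + r := by
    have := card_inter_add_card_sdiff A D
    simp only [L, List.length_append, length_toList]; omega
  have hnd : L.Nodup := by
    refine List.nodup_append.2 ⟨nodup_toList _, nodup_toList _, ?_⟩
    simp only [mem_toList, mem_inter, mem_sdiff]
    rintro a ⟨_, ha⟩ b ⟨_, hb⟩ rfl
    exact hb ha
  refine ⟨fun i => L[(i : ℕ)], fun i j hij => Fin.ext (hnd.getElem_inj_iff.1 hij), ?_,
    fun i => ?_⟩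
  · ext a
    have hmem : a ∈ L ↔ a ∈ A := by simp [L, ← and_or_left, em]
    rw [← hmem, List.mem_iff_getElem]
    simp only [mem_image, mem_univ, true_and, Fin.exists_iff]
    constructor
    · rintro ⟨i, hi, rfl⟩; exact ⟨i, by omega, rfl⟩
    · rintro ⟨i, hi, rfl⟩; exact ⟨i, by omega, rfl⟩
  · by_cases hi : (i : ℕ) < r
    · have hmem : L[(i : ℕ)] ∈ A ∩ D := by
        rw [← mem_toList, List.getElem_append_left (by simpa [hD] using hi)]
        exact List.getElem_mem _
      simp [hi, (mem_inter.1 hmem).2]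
    · have hmem : L[(i : ℕ)] ∈ A \ D := by
        rw [← mem_toList, List.getElem_append_right (by simpa [hD] using hi)]
        exact List.getElem_mem _
      simp [hi, (mem_sdiff.1 hmem).2]

variable [Fintype α] {S : Set ℕ} {A D : Finset α} {m : ℕ} {x : α}

lemma mem_blockPartitions {P : Finset (List α)} :
    P ∈ blockPartitions S A D m ↔
      (∀ l ∈ P, IsBlock S A D l) ∧ (∀ a ∈ A, ∃! l, l ∈ P ∧ a ∈ l) ∧ #P = m := by
  simp only [blockPartitions, mem_filter, mem_powerset, subset_iff, mem_nodupLists]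
  exact ⟨fun ⟨h, hc⟩ => ⟨fun l hl => (h hl).2, hc⟩,
    fun ⟨h, hc⟩ => ⟨fun l hl => ⟨(h l hl).nodup, h l hl⟩, hc⟩⟩

section Relabel

variable [DecidableEq β] {f : α → β} {D₀ : Finset α} {D : Finset β}

lemma isBlock_map_iff (hf : Function.Injective f) (hD : ∀ a, a ∈ D₀ ↔ f a ∈ D) {l : List α} :
    IsBlock S (univ.image f) D (l.map f) ↔ IsBlock S univ D₀ l := by
  have hinter : (l.map f).toFinset ∩ D = (l.toFinset ∩ D₀).image f := by
    ext b; simp only [mem_inter, List.mem_toFinset, List.mem_map, mem_image]; grind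
  simp [isBlock_iff, hinter, card_image_of_injective _ hf, List.nodup_map_iff hf]

omit [DecidableEq α] [Fintype α] in
lemma existsUnique_mem_image_map_iff (hf : Function.Injective f) (P : Finset (List α)) (a : α) :
    (∃! l', l' ∈ P.image (List.map f) ∧ f a ∈ l') ↔ ∃! l, l ∈ P ∧ a ∈ l := by
  simp only [ExistsUnique, mem_image]
  constructor
  · rintro ⟨_, ⟨⟨l, hl, rfl⟩, ha⟩, huniq⟩
    refine ⟨l, ⟨hl, (List.mem_map_of_injective hf).1 ha⟩, fun l₂ h₂ => ?_⟩
    exact List.map_injective_iff.2 hf (huniq _ ⟨⟨l₂, h₂.1, rfl⟩, List.mem_map_of_mem h₂.2⟩)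
  · rintro ⟨l, ⟨hl, ha⟩, huniq⟩
    refine ⟨l.map f, ⟨⟨l, hl, rfl⟩, List.mem_map_of_mem ha⟩, ?_⟩
    rintro _ ⟨⟨l₂, h₂, rfl⟩, ha₂⟩
    rw [huniq l₂ ⟨h₂, (List.mem_map_of_injective hf).1 ha₂⟩]

variable [Fintype β]

lemma image_map_mem_blockPartitions_iff (hf : Function.Injective f)
    (hD : ∀ a, a ∈ D₀ ↔ f a ∈ D) {P : Finset (List α)} :
    P.image (List.map f) ∈ blockPartitions S (univ.image f) D m ↔
      P ∈ blockPartitions S univ D₀ m := by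
  simp only [mem_blockPartitions, forall_mem_image, mem_univ, forall_const,
    existsUnique_mem_image_map_iff hf, card_image_of_injective _ (List.map_injective_iff.2 hf)]
  simp only [isBlock_map_iff hf hD]

lemma card_blockPartitions_image (hf : Function.Injective f) (hD : ∀ a, a ∈ D₀ ↔ f a ∈ D) :
    #(blockPartitions S (univ.image f) D m) = #(blockPartitions S univ D₀ m) := by
  have hmap : Function.Injective (List.map f) := List.map_injective_iff.2 hf
  suffices blockPartitions S (univ.image f) D m =
      (blockPartitions S univ D₀ m).image (image (List.map f)) by
    rw [this, card_image_of_injective _ (image_injective hmap)]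
  ext P'
  refine ⟨fun hP' => ?_, fun hP' => ?_⟩
  · have hrange : ∀ l' ∈ P', l' ∈ Set.range (List.map f) := fun l' hl' => by
      rw [Set.range_list_map]
      intro b hb
      simpa using ((mem_blockPartitions.1 hP').1 l' hl').subset b hb
    have himage : (P'.preimage (List.map f) hmap.injOn).image (List.map f) = P' := by
      rw [image_preimage, filter_true_of_mem hrange]
    refine mem_image.2 ⟨_, ?_, himage⟩
    rwa [← image_map_mem_blockPartitions_iff hf hD, himage]
  · obtain ⟨P, hP, rfl⟩ := mem_image.1 hP'
    exact (image_map_mem_blockPartitions_iff hf hD).2 hP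

end Relabel

lemma filter_blockPartitions_disjoint (hx : x ∉ D) :
    {P ∈ blockPartitions S A D m | ∀ l ∈ P, x ∈ l → Disjoint l.toFinset D} =
      blockPartitions S A (insert x D) m := by
  ext P
  simp only [mem_filter, mem_blockPartitions, isBlock_insert_iff hx]
  grind

lemma notMem_of_mem_blockPartitions_sdiff {ℓ : List α} (hℓ : ℓ ≠ []) {Q : Finset (List α)}
    (hQ : Q ∈ blockPartitions S (A \ ℓ.toFinset) D m) : ℓ ∉ Q := by
  intro hℓQ
  obtain ⟨a, ha⟩ := List.exists_mem_of_ne_nil ℓ hℓ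
  have := ((mem_blockPartitions.1 hQ).1 ℓ hℓQ).subset a ha
  simp [ha] at this

lemma erase_mem_blockPartitions {ℓ : List α} {P : Finset (List α)}
    (hP : P ∈ blockPartitions S A D m) (hℓP : ℓ ∈ P) :
    P.erase ℓ ∈ blockPartitions S (A \ ℓ.toFinset) D (m - 1) := by
  obtain ⟨hblock, hcover, hcard⟩ := mem_blockPartitions.1 hP
  have hsep : ∀ l ∈ P, ∀ a ∈ l, a ∈ ℓ → l = ℓ := fun l hl a hal haℓ =>
    (hcover a ((hblock l hl).subset a hal)).unique ⟨hl, hal⟩ ⟨hℓP, haℓ⟩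
  refine mem_blockPartitions.2
    ⟨fun l hl => ?_, fun a ha => ?_, by rw [card_erase_of_mem hℓP, hcard]⟩
  · obtain ⟨hne, hlP⟩ := mem_erase.1 hl
    refine { hblock l hlP with subset := fun a ha => ?_ }
    exact mem_sdiff.2 ⟨(hblock l hlP).subset a ha,
      fun haℓ => hne (hsep l hlP a ha (List.mem_toFinset.1 haℓ))⟩
  · obtain ⟨haA, haℓ⟩ := mem_sdiff.1 ha
    obtain ⟨l, ⟨hlP, hal⟩, huniq⟩ := hcover a haA
    refine ⟨l, ⟨mem_erase.2 ⟨?_, hlP⟩, hal⟩, fun l' hl' => huniq l' ⟨mem_of_mem_erase hl'.1, hl'.2⟩⟩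
    rintro rfl
    exact haℓ (List.mem_toFinset.2 hal)

lemma insert_mem_blockPartitions {ℓ : List α} (hℓ : IsBlock S A D ℓ) (hm : 1 ≤ m)
    {Q : Finset (List α)} (hQ : Q ∈ blockPartitions S (A \ ℓ.toFinset) D (m - 1)) :
    insert ℓ Q ∈ blockPartitions S A D m := by
  obtain ⟨hblock, hcover, hcard⟩ := mem_blockPartitions.1 hQ
  have hfresh : ∀ l ∈ Q, ∀ a ∈ l, a ∉ ℓ := fun l hl a ha haℓ =>
    (mem_sdiff.1 ((hblock l hl).subset a ha)).2 (List.mem_toFinset.2 haℓ)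
  refine mem_blockPartitions.2 ⟨fun l hl => ?_, fun a ha => ?_, ?_⟩
  · rcases mem_insert.1 hl with rfl | hl
    exacts [hℓ, (hblock l hl).mono sdiff_subset]
  · by_cases haℓ : a ∈ ℓ
    · refine ⟨ℓ, ⟨mem_insert_self ℓ Q, haℓ⟩, fun l ⟨hl, hal⟩ => ?_⟩
      rcases mem_insert.1 hl with rfl | hl
      exacts [rfl, absurd haℓ (hfresh l hl a hal)]
    · obtain ⟨l, ⟨hlQ, hal⟩, huniq⟩ := hcover a (mem_sdiff.2 ⟨ha, mt List.mem_toFinset.1 haℓ⟩)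
      refine ⟨l, ⟨mem_insert_of_mem hlQ, hal⟩, fun l' ⟨hl', hal'⟩ => ?_⟩
      rcases mem_insert.1 hl' with rfl | hl'
      exacts [absurd hal' haℓ, huniq l' ⟨hl', hal'⟩]
  · rw [card_insert_of_notMem (notMem_of_mem_blockPartitions_sdiff hℓ.1 hQ), hcard]
    omega

lemma card_filter_mem_blockPartitions {ℓ : List α} (hℓ : IsBlock S A D ℓ) (hm : 1 ≤ m) :
    #{P ∈ blockPartitions S A D m | ℓ ∈ P} = #(blockPartitions S (A \ ℓ.toFinset) D (m - 1)) := by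
  have himage : {P ∈ blockPartitions S A D m | ℓ ∈ P} =
      (blockPartitions S (A \ ℓ.toFinset) D (m - 1)).image (insert ℓ) := by
    ext P
    simp only [mem_filter, mem_image]
    constructor
    · rintro ⟨hP, hℓP⟩
      exact ⟨P.erase ℓ, erase_mem_blockPartitions hP hℓP, insert_erase hℓP⟩
    · rintro ⟨Q, hQ, rfl⟩
      exact ⟨insert_mem_blockPartitions hℓ hm hQ, mem_insert_self ℓ Q⟩
  rw [himage, card_image_of_injOn]
  intro Q₁ hQ₁ Q₂ hQ₂ h
  rw [← erase_insert (notMem_of_mem_blockPartitions_sdiff hℓ.1 hQ₁),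
    ← erase_insert (notMem_of_mem_blockPartitions_sdiff hℓ.1 hQ₂)]
  exact congrArg (·.erase ℓ) h

lemma card_blockPartitions_eq_add_sum (hxA : x ∈ A) (hx : x ∉ D) (hm : 1 ≤ m) :
    #(blockPartitions S A D m) = #(blockPartitions S A (insert x D) m) +
      ∑ ℓ ∈ crossingBlocks S A D x, #(blockPartitions S (A \ ℓ.toFinset) D (m - 1)) := by
  rw [← card_filter_add_card_filter_not
    (fun P => ∀ l ∈ P, x ∈ l → Disjoint l.toFinset D), filter_blockPartitions_disjoint hx]
  have hunion : {P ∈ blockPartitions S A D m | ¬∀ l ∈ P, x ∈ l → Disjoint l.toFinset D} =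
      (crossingBlocks S A D x).biUnion fun ℓ => {P ∈ blockPartitions S A D m | ℓ ∈ P} := by
    ext P
    simp only [mem_filter, mem_biUnion, mem_crossingBlocks, not_forall, exists_prop]
    constructor
    · rintro ⟨hP, l, hlP, hxl, hl⟩
      exact ⟨l, ⟨(mem_blockPartitions.1 hP).1 l hlP, hxl, hl⟩, hP, hlP⟩
    · rintro ⟨l, ⟨-, hxl, hl⟩, hP, hlP⟩
      exact ⟨hP, l, hlP, hxl, hl⟩
  rw [hunion, card_biUnion]
  · congr 1
    exact sum_congr rfl fun ℓ hℓ => card_filter_mem_blockPartitions (mem_crossingBlocks.1 hℓ).1 hm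
  · intro ℓ₁ hℓ₁ ℓ₂ hℓ₂ hne
    refine disjoint_left.2 fun P hP₁ hP₂ => hne ?_
    obtain ⟨hP, hℓ₁P⟩ := mem_filter.1 hP₁
    exact ((mem_blockPartitions.1 hP).2.1 x hxA).unique
      ⟨hℓ₁P, (mem_crossingBlocks.1 hℓ₁).2.1⟩ ⟨(mem_filter.1 hP₂).2, (mem_crossingBlocks.1 hℓ₂).2.1⟩

lemma card_filter_toFinset_eq (F : Finset α) : #{l ∈ nodupLists α | l.toFinset = F} = (#F)! := by
  have hperm : {l ∈ nodupLists α | l.toFinset = F} = F.toList.permutations.toFinset := by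
    ext l
    simp only [mem_filter, mem_nodupLists, List.mem_toFinset, List.mem_permutations]
    refine ⟨fun ⟨hl, hF⟩ => List.perm_of_nodup_nodup_toFinset_eq hl F.nodup_toList (by simp [hF]),
      fun h => ⟨h.nodup_iff.2 F.nodup_toList, by simp [List.toFinset_eq_of_perm _ _ h]⟩⟩
  rw [hperm, List.toFinset_card_of_nodup (List.nodup_permutations _ F.nodup_toList),
    List.length_permutations, length_toList]

lemma insert_insert_inter_eq_singleton (hx : x ∉ D) {i : α} (hi : i ∈ D) {G : Finset α}
    (hG : G ⊆ (insert x D)ᶜ) : insert x (insert i G) ∩ D = {i} := by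
  ext a
  have := @hG a
  simp only [mem_compl, mem_insert, not_or] at this
  simp only [mem_inter, mem_insert, mem_singleton]
  grind

lemma insert_insert_sdiff_eq {i : α} (hi : i ∈ D) {G : Finset α}
    (hG : G ⊆ (insert x D)ᶜ) : insert x (insert i G) \ insert x D = G := by
  ext a
  have := @hG a
  simp only [mem_compl, mem_insert, not_or] at this
  simp only [mem_sdiff, mem_insert, not_or]
  grind

lemma filter_card_inter_eq_one_eq_biUnion (hx : x ∉ D) (s : ℕ) :
    ({F | x ∈ F ∧ #F = s + 2 ∧ #(F ∩ D) = 1} : Finset (Finset α)) =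
      D.biUnion fun i => ((insert x D)ᶜ.powersetCard s).image fun G => insert x (insert i G) := by
  ext F
  simp only [mem_filter, mem_univ, true_and, mem_biUnion, mem_image, mem_powersetCard]
  constructor
  · rintro ⟨hxF, hFcard, hFD⟩
    obtain ⟨i, hi⟩ := card_eq_one.1 hFD
    have hiF : i ∈ F ∧ i ∈ D := mem_inter.1 (hi ▸ mem_singleton_self i)
    have hxiF : insert x D ∩ F = {x, i} := by
      rw [insert_inter_of_mem hxF, inter_comm, hi]
    have hxi : x ≠ i := by rintro rfl; exact hx hiF.2
    refine ⟨i, hiF.2, F \ insert x D, ⟨fun a ha => mem_compl.2 (mem_sdiff.1 ha).2, ?_⟩, ?_⟩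
    · rw [card_sdiff, hxiF, card_pair hxi, hFcard, Nat.add_sub_cancel]
    · have hFD' : ∀ a ∈ F, a ∈ D → a = i := fun a h₁ h₂ =>
        mem_singleton.1 (hi ▸ mem_inter.2 ⟨h₁, h₂⟩)
      ext a
      simp only [mem_insert, mem_sdiff, not_or]
      grind
  · rintro ⟨i, hi, G, ⟨hG, hGcard⟩, rfl⟩
    refine ⟨mem_insert_self x _, ?_,
      by rw [insert_insert_inter_eq_singleton hx hi hG, card_singleton]⟩
    have hxG : x ∉ insert i G := by
      simp only [mem_insert, not_or]
      exact ⟨by rintro rfl; exact hx hi, fun h => by simpa using hG h⟩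
    have hiG : i ∉ G := fun h => by simpa [hi] using hG h
    rw [card_insert_of_notMem hxG, card_insert_of_notMem hiG, hGcard]

lemma card_filter_card_inter_eq_one (hx : x ∉ D) (s : ℕ) :
    #{F : Finset α | x ∈ F ∧ #F = s + 2 ∧ #(F ∩ D) = 1} =
      #D * (Fintype.card α - #D - 1).choose s := by
  rw [filter_card_inter_eq_one_eq_biUnion hx, card_biUnion, sum_congr rfl fun i hi => ?_,
    sum_const, smul_eq_mul]
  · rw [card_image_of_injOn, card_powersetCard, card_compl, card_insert_of_notMem hx,
      Nat.sub_add_eq]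
    intro G₁ hG₁ G₂ hG₂ h
    rw [← insert_insert_sdiff_eq hi (mem_powersetCard.1 hG₁).1,
      ← insert_insert_sdiff_eq hi (mem_powersetCard.1 hG₂).1]
    exact congrArg (· \ insert x D) h
  · intro i hi j hj hij
    refine disjoint_left.2 fun F hFi hFj => hij ?_
    obtain ⟨G, hG, rfl⟩ := mem_image.1 hFi
    obtain ⟨G', hG', hGG'⟩ := mem_image.1 hFj
    rw [← singleton_inj, ← insert_insert_inter_eq_singleton hx hi (mem_powersetCard.1 hG).1,
      ← hGG', insert_insert_inter_eq_singleton hx hj (mem_powersetCard.1 hG').1]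

lemma card_nodupLists_card_inter_eq_one (hx : x ∉ D) (s : ℕ) :
    #{l ∈ nodupLists α | x ∈ l ∧ #(l.toFinset ∩ D) = 1 ∧ l.length = s + 2} =
      #D * (Fintype.card α - #D - 1).choose s * (s + 2)! := by
  rw [← card_filter_card_inter_eq_one hx, card_eq_sum_card_fiberwise (f := List.toFinset)
    (t := {F : Finset α | x ∈ F ∧ #F = s + 2 ∧ #(F ∩ D) = 1}), ← smul_eq_mul, ← sum_const]
  · refine sum_congr rfl fun F hF => ?_
    obtain ⟨hxF, hFcard, hFD⟩ : x ∈ F ∧ #F = s + 2 ∧ #(F ∩ D) = 1 := by simpa using hF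
    rw [← hFcard, ← card_filter_toFinset_eq, filter_filter]
    refine congrArg card (filter_congr fun l hl => ⟨fun h => h.2, ?_⟩)
    rintro rfl
    refine ⟨⟨List.mem_toFinset.1 hxF, hFD, ?_⟩, rfl⟩
    rw [← List.toFinset_card_of_nodup (mem_nodupLists.1 hl), hFcard]
  · intro l hl
    obtain ⟨hnd, hxl, hD, hlen⟩ := by simpa using hl
    simp [hxl, hD, List.toFinset_card_of_nodup hnd, hlen]

lemma card_filter_length_crossingBlocks (hx : x ∉ D) (s : ℕ) :
    #{l ∈ crossingBlocks S univ D x | l.length = s} =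
      if s ∈ S ∧ 2 ≤ s then #D * (Fintype.card α - #D - 1).choose (s - 2) * s ! else 0 := by
  split_ifs with hs
  · obtain ⟨t, rfl⟩ : ∃ t, s = t + 2 := ⟨s - 2, by omega⟩
    rw [Nat.add_sub_cancel, ← card_nodupLists_card_inter_eq_one hx t]
    refine congrArg card (ext fun l => ?_)
    simp only [mem_filter, mem_crossingBlocks, mem_nodupLists]
    constructor
    · rintro ⟨⟨hblock, hxl, hD⟩, hlen⟩
      exact ⟨hblock.nodup, hxl, hblock.card_inter_eq_one hD, hlen⟩
    · rintro ⟨hnd, hxl, hD, hlen⟩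
      refine ⟨⟨⟨?_, hnd, hlen ▸ hs.1, fun a _ => mem_univ a, hD.le⟩, hxl, ?_⟩, hlen⟩
      · rintro rfl; simp at hlen
      · rw [not_disjoint_iff_nonempty_inter, ← card_pos, hD]; exact one_pos
  · refine card_eq_zero.2 (filter_eq_empty_iff.2 fun l hl hlen => hs ⟨?_, ?_⟩)
    · exact hlen ▸ (mem_crossingBlocks.1 hl).1.length_mem
    · exact hlen ▸ two_le_length_of_mem_crossingBlocks hx hl

lemma sum_crossingBlocks_eq (hx : x ∉ D) (v : ℕ → ℕ) :
    ∑ l ∈ crossingBlocks S univ D x, v l.length =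
      #D * ∑ s ∈ range (Fintype.card α - #D + 2) with s ∈ S,
        s ! * (if 2 ≤ s then (Fintype.card α - #D - 1).choose (s - 2) else 0) * v s := by
  have hmaps : ∀ l ∈ crossingBlocks S univ D x, l.length ∈ range (Fintype.card α - #D + 2) :=
    fun l hl => by
      have := length_le_of_mem_crossingBlocks hl
      rw [card_univ_sdiff] at this
      exact mem_range.2 (by omega)
  rw [← sum_fiberwise_of_maps_to hmaps, sum_filter, mul_sum]
  refine sum_congr rfl fun s _ => ?_
  rw [sum_congr rfl fun l hl => congrArg v (mem_filter.1 hl).2, sum_const, smul_eq_mul,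
    card_filter_length_crossingBlocks hx]
  by_cases hs : s ∈ S <;> by_cases h2 : 2 ≤ s <;> simp [hs, h2]
  ring

end ListPartition

open ListPartition

lemma srLahSet_eq_blockPartitions (S : Set ℕ) (r n k : ℕ) :
    srLahSet S r n k = ↑(blockPartitions S univ {i : Fin (n + r) | (i : ℕ) < r} (k + r)) := by
  ext P
  simp only [srLahSet, IsListPartition, Set.mem_ofPred_eq, mem_coe, mem_blockPartitions,
    isBlock_iff, mem_univ, implies_true, forall_const, true_and, card_le_one, mem_inter,
    List.mem_toFinset, mem_filter]
  constructor
  · rintro ⟨⟨hne, hcover⟩, hcard, hlen, hsep⟩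
    exact ⟨fun l hl => ⟨(hne l hl).1, (hne l hl).2, hlen l hl, fun i hi j hj =>
      by_contra fun hij => hsep i j hi.2 hj.2 hij l hl hi.1 hj.1⟩, hcover, hcard⟩
  · rintro ⟨hblock, hcover, hcard⟩
    exact ⟨⟨fun l hl => ⟨(hblock l hl).1, (hblock l hl).2.1⟩, hcover⟩, hcard,
      fun l hl => (hblock l hl).2.2.1,
      fun i j hi hj hij l hl hil hjl => hij ((hblock l hl).2.2.2 i ⟨hil, hi⟩ j ⟨hjl, hj⟩)⟩

lemma srLah_eq_card_blockPartitions (S : Set ℕ) (r n k : ℕ) :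
    srLah S r n k = #(blockPartitions S univ {i : Fin (n + r) | (i : ℕ) < r} (k + r)) := by
  rw [srLah, srLahSet_eq_blockPartitions, Nat.card_coe_set_eq, Set.ncard_coe_finset]

lemma card_blockPartitions_eq_srLah {α : Type*} [DecidableEq α] [Fintype α] {S : Set ℕ}
    {A D : Finset α} {n r : ℕ} (k : ℕ) (hA : #A = n + r) (hD : #(A ∩ D) = r) :
    #(blockPartitions S A D (k + r)) = srLah S r n k := by
  obtain ⟨f, hf, rfl, hfD⟩ := exists_injective_fin_image_eq hA hD
  rw [srLah_eq_card_blockPartitions, card_blockPartitions_image hf]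
  simp [hfD]

lemma card_blockPartitions_compl_eq_srLah {α : Type*} [DecidableEq α] [Fintype α] {S : Set ℕ}
    {D : Finset α} {x : α} {n r k : ℕ} (hα : Fintype.card α = n + 1 + r) (hD : #D = r)
    {l : List α} (hl : l ∈ crossingBlocks S univ D x) :
    #(blockPartitions S (univ \ l.toFinset) D (k + r - 1)) =
      srLah S (r - 1) (n + 2 - l.length) k := by
  have hlD := card_inter_eq_one_of_mem_crossingBlocks hl
  have hlen := length_le_of_mem_crossingBlocks hl
  have hr : 1 ≤ r := hD ▸ hlD ▸ card_le_card inter_subset_right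
  rw [card_univ_sdiff, hα, hD] at hlen
  rw [show k + r - 1 = k + (r - 1) by omega]
  refine card_blockPartitions_eq_srLah k ?_ ?_
  · rw [card_univ_sdiff, hα, List.toFinset_card_of_nodup (mem_crossingBlocks.1 hl).1.nodup]
    omega
  · rw [show (univ \ l.toFinset) ∩ D = D \ l.toFinset by ext; simp [and_comm], card_sdiff, hlD, hD]

theorem srLah_succ {S : Set ℕ} {r n k : ℕ} (hk : 1 ≤ k) :
    srLah S r (n + 1) k = srLah S (r + 1) n (k - 1) +
      r * ∑ s ∈ range (n + 3) with s ∈ S,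
        s ! * (if 2 ≤ s then n.choose (s - 2) else 0) * srLah S (r - 1) (n + 2 - s) k := by
  set D : Finset (Fin (n + 1 + r)) := {i | (i : ℕ) < r}
  set x : Fin (n + 1 + r) := ⟨r, by omega⟩
  have hx : x ∉ D := by simp [D, x]
  have hD : #D = r := by simp [D, Fin.card_filter_val_lt]
  rw [srLah_eq_card_blockPartitions, card_blockPartitions_eq_add_sum (mem_univ x) hx (by omega),
    sum_congr rfl fun l hl => card_blockPartitions_compl_eq_srLah (n := n) (by simp) hD hl]
  have hinsert : #(blockPartitions S univ (insert x D) (k + r)) = srLah S (r + 1) n (k - 1) := by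
    rw [show k + r = k - 1 + (r + 1) by omega]
    exact card_blockPartitions_eq_srLah _ (by simp; omega) (by simp [card_insert_of_notMem hx, hD])
  have hsum := sum_crossingBlocks_eq (S := S) hx fun s => srLah S (r - 1) (n + 2 - s) k
  rw [Fintype.card_fin, hD, show n + 1 + r - r + 2 = n + 3 by omega,
    show n + 1 + r - r - 1 = n by omega] at hsum
  rw [hinsert, hsum]

lemma srLahZ_natCast (S : Set ℕ) (r n k : ℕ) : srLahZ S r n k = srLah S r n k := by
  simp [srLahZ]

theorem srLah_recurrence_general (S : Set ℕ) (r n k : ℕ) (hk : 1 ≤ k) :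
    (srLah S r (n + 1) k : ℤ) =
      (srLah S (r + 1) n (k - 1) : ℤ) +
      r * ∑ᶠ s ∈ S, (s.factorial : ℤ) * (if 2 ≤ s then (n.choose (s - 2) : ℤ) else 0) *
        srLahZ S (r - 1) ((n : ℤ) - s + 2) k := by
  set F : ℕ → ℤ := fun s => (s.factorial : ℤ) * (if 2 ≤ s then (n.choose (s - 2) : ℤ) else 0) *
    srLahZ S (r - 1) ((n : ℤ) - s + 2) k
  have hsupport : S ∩ Function.support F = ↑{s ∈ range (n + 3) | s ∈ S} ∩ Function.support F := by
    ext s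
    simp only [Set.mem_inter_iff, Function.mem_support, coe_filter, mem_range, Set.mem_ofPred_eq]
    refine ⟨fun ⟨hs, hF⟩ => ⟨⟨?_, hs⟩, hF⟩, fun ⟨⟨_, hs⟩, hF⟩ => ⟨hs, hF⟩⟩
    by_contra hlarge
    exact hF (by simp [F, Nat.choose_eq_zero_of_lt (show n < s - 2 by omega)])
  rw [finsum_mem_eq_sum_of_inter_support_eq F hsupport, srLah_succ hk]
  push_cast
  congr 2
  refine sum_congr rfl fun s hmem => ?_
  have hs : s ≤ n + 2 := Nat.lt_succ_iff.1 (mem_range.1 (mem_filter.1 hmem).1)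
  simp only [F, show (n : ℤ) - s + 2 = ((n + 2 - s : ℕ) : ℤ) by omega, srLahZ_natCast]

/-- recurrence
`L_{S,r}(n+1,k) = L_{S,r+1}(n,k−1) + r·Σ_{s∈S} s!·C(n,s−2)·L_{S,r−1}(n−s+2,k)`,
with `C(n,s−2) = 0` when `s−2 < 0`. -/
theorem srLah_recurrence (S : Set ℕ) (hS : ∀ s ∈ S, 0 < s) (r n k : ℕ)
    (hr : 1 ≤ r) (hn : 1 ≤ n) (hk : 1 ≤ k) :
    (srLah S r (n + 1) k : ℤ) =
      (srLah S (r + 1) n (k - 1) : ℤ) +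
      r * ∑ᶠ s ∈ S, (s.factorial : ℤ) * (if 2 ≤ s then (n.choose (s - 2) : ℤ) else 0) *
        srLahZ S (r - 1) ((n : ℤ) - s + 2) k :=
  srLah_recurrence_general S r n k hk
end

section
/- Let S be a set of positive integers, r ≥ 1 an integer, and n ≥ 1, k ≥ 1 integers. Then L_{S,r}(n,k) = Σ_{s∈S} s!·C(n, s−1)·L_{S,r−1}(n−s+1, k), where the sum has only finitely many nonzero terms (terms with s−1 > n vanish). -/
open Finset
open scoped Classical

open Function
open scoped Nat

/-!
Classify the partitions by the block containing `0` (the paper's element `1`: everything is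
0-indexed here). That block consists of `0` and `s - 1` of the `n` undistinguished elements in
some order, so there are `s! * C(n, s - 1)` blocks of length `s`. Deleting the block and
relabelling the remaining `n + r - s` elements increasingly turns the other `r - 1`
distinguished elements into the first `r - 1`; this identifies the partitions containing a
given block with those counted by `L_{S,r-1}(n - s + 1, k)`.
-/

section NodupLists

variable {α : Type*} [DecidableEq α]

noncomputable def nodupLists (A : Finset α) (s : ℕ) : Finset (List α) :=
  univ.image fun f : Fin s ↪ A => List.ofFn fun i => (f i : α)

theorem mem_nodupLists {A : Finset α} {s : ℕ} {l : List α} :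
    l ∈ nodupLists A s ↔ l.Nodup ∧ l.length = s ∧ ∀ x ∈ l, x ∈ A := by
  simp only [nodupLists, mem_image, mem_univ, true_and]
  constructor
  · rintro ⟨f, rfl⟩
    refine ⟨List.nodup_ofFn.2 (Subtype.val_injective.comp f.injective), List.length_ofFn, ?_⟩
    simp only [List.mem_ofFn]
    rintro _ ⟨i, rfl⟩
    exact (f i).2
  · rintro ⟨hnd, rfl, hA⟩
    exact ⟨⟨fun i => ⟨l.get i, hA _ (List.get_mem _ _)⟩,
      fun i j h => List.nodup_iff_injective_get.1 hnd (congrArg Subtype.val h)⟩, List.ofFn_get l⟩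

theorem card_nodupLists (A : Finset α) (s : ℕ) : #(nodupLists A s) = (#A).descFactorial s := by
  rw [nodupLists, card_image_of_injective, card_univ, Fintype.card_embedding_eq,
    Fintype.card_fin, Fintype.card_coe]
  intro f g h
  ext i
  exact congrFun (List.ofFn_injective h) i

theorem card_filter_mem_nodupLists_insert {a : α} {B : Finset α} (ha : a ∉ B) (s : ℕ) :
    #{l ∈ nodupLists (insert a B) (s + 1) | a ∈ l} = (s + 1)! * (#B).choose s := by
  -- Lists through `a` are all lists minus those in `B`, and in falling powers
  -- `(m + 1)^(s+1) - m^(s+1) = (s + 1) * m^(s)` for `m = #B`.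
  have hsplit := card_filter_add_card_filter_not
    (s := nodupLists (insert a B) (s + 1)) (a ∈ ·)
  have hneg : {l ∈ nodupLists (insert a B) (s + 1) | a ∉ l} = nodupLists B (s + 1) := by
    ext l
    simp only [mem_filter, mem_nodupLists, mem_insert]
    grind
  rw [hneg, card_nodupLists, card_nodupLists, card_insert_of_notMem ha,
    Nat.succ_descFactorial_succ, Nat.descFactorial_succ,
    Nat.descFactorial_eq_factorial_mul_choose] at hsplit
  rw [Nat.factorial_succ]
  rcases le_or_gt s #B with hs | hs
  · obtain ⟨d, hd⟩ := Nat.exists_eq_add_of_le hs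
    rw [hd, Nat.add_sub_cancel_left] at hsplit
    rw [hd]
    linarith
  · rw [Nat.choose_eq_zero_of_lt hs] at hsplit ⊢
    simpa using hsplit

end NodupLists

section Relabel

variable {N m : ℕ}

def insertRelabel (l : List (Fin N)) (ψ : Fin m ↪ Fin N) (P : Finset (List (Fin m))) :
    Finset (List (Fin N)) :=
  insert l (P.image (List.map ψ))

variable {l : List (Fin N)} {ψ : Fin m ↪ Fin N}

theorem mem_insertRelabel {P : Finset (List (Fin m))} {L : List (Fin N)} :
    L ∈ insertRelabel l ψ P ↔ L = l ∨ ∃ L' ∈ P, L'.map ψ = L := by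
  simp [insertRelabel]

theorem notMem_image_map_of_compl (hl : l ≠ []) (hcompl : ∀ x, x ∈ l ↔ x ∉ Set.range ψ)
    (P : Finset (List (Fin m))) : l ∉ P.image (List.map ψ) := by
  simp only [mem_image, not_exists, not_and]
  rintro L - rfl
  obtain ⟨_, hx⟩ := List.exists_mem_of_ne_nil _ hl
  obtain ⟨y, -, rfl⟩ := List.mem_map.1 hx
  exact (hcompl _).1 hx ⟨y, rfl⟩

theorem card_insertRelabel (hl : l ≠ []) (hcompl : ∀ x, x ∈ l ↔ x ∉ Set.range ψ)
    (P : Finset (List (Fin m))) : #(insertRelabel l ψ P) = #P + 1 := by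
  rw [insertRelabel, card_insert_of_notMem (notMem_image_map_of_compl hl hcompl P),
    card_image_of_injective _ (List.map_injective_iff.2 ψ.injective)]

theorem insertRelabel_injective (hl : l ≠ []) (hcompl : ∀ x, x ∈ l ↔ x ∉ Set.range ψ) :
    Injective (insertRelabel l ψ) := by
  intro P Q h
  have := congrArg (Finset.erase · l) h
  simp only [insertRelabel, erase_insert (notMem_image_map_of_compl hl hcompl _)] at this
  exact image_injective (List.map_injective_iff.2 ψ.injective) this

theorem isListPartition_insertRelabel_iff (hl : l ≠ []) (hnd : l.Nodup)
    (hcompl : ∀ x, x ∈ l ↔ x ∉ Set.range ψ) {P : Finset (List (Fin m))} :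
    IsListPartition (insertRelabel l ψ P) ↔ IsListPartition P := by
  have hmap : Injective (List.map ψ) := List.map_injective_iff.2 ψ.injective
  simp only [IsListPartition, mem_insertRelabel]
  constructor
  · rintro ⟨hblocks, hcover⟩
    refine ⟨fun L hL => ?_, fun y => ?_⟩
    · obtain ⟨hne, hnd'⟩ := hblocks _ (Or.inr ⟨L, hL, rfl⟩)
      exact ⟨by simpa using hne, hnd'.of_map _⟩
    · obtain ⟨B, ⟨hB, hyB⟩, huniq⟩ := hcover (ψ y)
      rcases hB with rfl | ⟨L, hL, rfl⟩
      · exact absurd ⟨y, rfl⟩ ((hcompl _).1 hyB)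
      · refine ⟨L, ⟨hL, (List.mem_map_of_injective ψ.injective).1 hyB⟩, ?_⟩
        rintro L' ⟨hL', hyL'⟩
        exact hmap (huniq _ ⟨Or.inr ⟨L', hL', rfl⟩, List.mem_map_of_mem hyL'⟩)
  · rintro ⟨hblocks, hcover⟩
    refine ⟨?_, fun x => ?_⟩
    · rintro _ (rfl | ⟨L, hL, rfl⟩)
      · exact ⟨hl, hnd⟩
      · exact ⟨by simpa using (hblocks L hL).1, (hblocks L hL).2.map ψ.injective⟩
    by_cases hx : x ∈ l
    · refine ⟨l, ⟨Or.inl rfl, hx⟩, ?_⟩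
      rintro _ ⟨rfl | ⟨L, -, rfl⟩, hxL⟩
      · rfl
      · obtain ⟨y, -, rfl⟩ := List.mem_map.1 hxL
        exact absurd ⟨y, rfl⟩ ((hcompl _).1 hx)
    · obtain ⟨y, rfl⟩ := not_not.1 (mt (hcompl x).2 hx)
      obtain ⟨L, ⟨hL, hyL⟩, huniq⟩ := hcover y
      refine ⟨L.map ψ, ⟨Or.inr ⟨L, hL, rfl⟩, List.mem_map_of_mem hyL⟩, ?_⟩
      rintro _ ⟨rfl | ⟨L', hL', rfl⟩, hyL'⟩
      · exact absurd hyL' hx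
      · rw [huniq L' ⟨hL', (List.mem_map_of_injective ψ.injective).1 hyL'⟩]

theorem exists_insertRelabel_eq (hcompl : ∀ x, x ∈ l ↔ x ∉ Set.range ψ)
    {P : Finset (List (Fin N))} (hP : IsListPartition P) (hlP : l ∈ P) :
    ∃ P' : Finset (List (Fin m)), insertRelabel l ψ P' = P := by
  have hmap : Injective (List.map ψ) := List.map_injective_iff.2 ψ.injective
  have hrange : ∀ L ∈ P.erase l, L ∈ Set.range (List.map ψ) := by
    intro L hL
    rw [Set.range_list_map]
    intro x hxL
    by_contra hx
    exact (mem_erase.1 hL).1 ((hP.2 x).unique ⟨(mem_erase.1 hL).2, hxL⟩ ⟨hlP, (hcompl x).2 hx⟩)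
  refine ⟨(P.erase l).preimage (List.map ψ) hmap.injOn, ?_⟩
  rw [insertRelabel, image_preimage, filter_true_of_mem hrange, insert_erase hlP]

def SeparatesBelow (r : ℕ) (P : Finset (List (Fin N))) : Prop :=
  ∀ i j : Fin N, (i : ℕ) < r → (j : ℕ) < r → i ≠ j → ∀ l ∈ P, i ∈ l → j ∉ l

theorem separatesBelow_insertRelabel_iff {r t : ℕ} (hψ : ∀ j, (ψ j : ℕ) < r ↔ (j : ℕ) < t)
    (hl : ∀ x ∈ l, ∀ y ∈ l, (x : ℕ) < r → (y : ℕ) < r → x = y) {P : Finset (List (Fin m))} :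
    SeparatesBelow r (insertRelabel l ψ P) ↔ SeparatesBelow t P := by
  simp only [SeparatesBelow, mem_insertRelabel]
  constructor
  · intro h i j hi hj hij L hL hiL
    exact h (ψ i) (ψ j) ((hψ i).2 hi) ((hψ j).2 hj) (ψ.injective.ne hij) _
      (Or.inr ⟨L, hL, rfl⟩) (List.mem_map_of_mem hiL) ∘ List.mem_map_of_mem
  · rintro h i j hi hj hij _ (rfl | ⟨L, hL, rfl⟩) hiL hjL
    · exact hij (hl i hiL j hjL hi hj)
    · obtain ⟨a, ha, rfl⟩ := List.mem_map.1 hiL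
      obtain ⟨b, hb, rfl⟩ := List.mem_map.1 hjL
      exact h a b ((hψ a).1 hi) ((hψ b).1 hj) (ne_of_apply_ne ψ hij) L hL ha hb

end Relabel

theorem exists_embedding_compl {n t : ℕ} {l : List (Fin (n + (t + 1)))} (hnd : l.Nodup)
    (hlen : l.length ≤ n + 1) (h0 : 0 ∈ l) (hl : ∀ x ∈ l, (x : ℕ) < t + 1 → x = 0) :
    ∃ ψ : Fin ((n + 1 - l.length) + t) ↪ Fin (n + (t + 1)),
      (∀ x, x ∈ l ↔ x ∉ Set.range ψ) ∧ ∀ j, (ψ j : ℕ) < t + 1 ↔ (j : ℕ) < t := by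
  set C := l.toFinsetᶜ
  have hC : #C = (n + 1 - l.length) + t := by
    rw [card_compl, List.toFinset_card_of_nodup hnd, Fintype.card_fin]
    omega
  let e := C.orderEmbOfFin hC
  refine ⟨e.toEmbedding, fun x => ?_, fun j => ?_⟩
  · have hrange : Set.range e.toEmbedding = C := range_orderEmbOfFin C hC
    rw [hrange]
    simp [C]
  have hsmall : {x ∈ C | x.val < t + 1} =
      ({x | x.val < t + 1} : Finset (Fin (n + (t + 1)))).erase 0 := by
    ext x
    simp only [C, mem_filter, mem_compl, List.mem_toFinset, mem_erase, mem_univ, true_and]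
    constructor
    · rintro ⟨hx, hxt⟩
      exact ⟨fun h => hx (h ▸ h0), hxt⟩
    · rintro ⟨hx, hxt⟩
      exact ⟨fun h => hx (hl x h hxt), hxt⟩
  have hcount : #{i | (e i : ℕ) < t + 1} = t := by
    have himage : ({i | (e i : ℕ) < t + 1} : Finset _).map e.toEmbedding =
        {x ∈ C | x.val < t + 1} := by
      rw [← map_orderEmbOfFin_univ C hC, filter_map]
      rfl
    rw [← card_map e.toEmbedding, himage, hsmall, card_erase_of_mem (by simp),
      Fin.card_filter_val_lt]
    omega
  -- `C` meets `{0, …, t}` in exactly `t` points, which the increasing enumeration `e` hits first.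
  have hlower := Fin.lt_card_filter_univ_iff_apply_of_imp (j := j) (fun i => (e i : ℕ) < t + 1)
    fun i i' hi' hi => lt_of_le_of_lt (e.monotone hi') hi
  rw [hcount] at hlower
  exact hlower.symm

theorem card_eq_sum_card_filter_mem {N : ℕ} {A : Finset (Finset (List (Fin N)))}
    (hA : ∀ P ∈ A, IsListPartition P) (x : Fin N) {C : Finset (List (Fin N))}
    (hxC : ∀ l ∈ C, x ∈ l) (hC : ∀ P ∈ A, ∀ l ∈ P, x ∈ l → l ∈ C) :
    #A = ∑ l ∈ C, #{P ∈ A | l ∈ P} := by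
  rw [← card_biUnion]
  · congr 1
    ext P
    simp only [mem_biUnion, mem_filter]
    refine ⟨fun hP => ?_, fun ⟨_, _, hP, _⟩ => hP⟩
    obtain ⟨l, ⟨hl, hxl⟩, -⟩ := (hA P hP).2 x
    exact ⟨l, hC P hP l hl hxl, hP, hl⟩
  · intro l hl l' hl' hne
    simp only [onFun, disjoint_left, mem_filter, not_and]
    intro P ⟨hP, hlP⟩ _ hl'P
    exact hne (((hA P hP).2 x).unique ⟨hlP, hxC l hl⟩ ⟨hl'P, hxC l' hl'⟩)

theorem srLahSet_finite (S : Set ℕ) (r n k : ℕ) : (srLahSet S r n k).Finite := by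
  have hlists := List.finite_length_le (Fin (n + r)) (n + r)
  refine (finite_toSet hlists.toFinset.powerset).subset fun P hP => ?_
  simp only [coe_powerset, Set.mem_preimage, Set.mem_powerset_iff, coe_subset]
  intro l hl
  simpa using (hP.1.1 l hl).2.length_le_card

theorem srLahSet_sep_mem_eq_image {S : Set ℕ} {t n m k : ℕ} {l : List (Fin (n + (t + 1)))}
    {ψ : Fin (m + t) ↪ Fin (n + (t + 1))} (hl : l ≠ []) (hnd : l.Nodup) (hlS : l.length ∈ S)
    (hlsep : ∀ x ∈ l, ∀ y ∈ l, (x : ℕ) < t + 1 → (y : ℕ) < t + 1 → x = y)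
    (hcompl : ∀ x, x ∈ l ↔ x ∉ Set.range ψ) (hψ : ∀ j, (ψ j : ℕ) < t + 1 ↔ (j : ℕ) < t) :
    {P ∈ srLahSet S (t + 1) n k | l ∈ P} = insertRelabel l ψ '' srLahSet S t m k := by
  ext P
  constructor
  · rintro ⟨⟨hpart, hcard, hlen, hsep⟩, hlP⟩
    obtain ⟨P, rfl⟩ := exists_insertRelabel_eq hcompl hpart hlP
    refine ⟨P, ⟨(isListPartition_insertRelabel_iff hl hnd hcompl).1 hpart, ?_, ?_,
      (separatesBelow_insertRelabel_iff hψ hlsep).1 hsep⟩, rfl⟩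
    · rw [card_insertRelabel hl hcompl] at hcard
      omega
    · intro L hL
      simpa using hlen _ (mem_insertRelabel.2 (Or.inr ⟨L, hL, rfl⟩))
  · rintro ⟨P, ⟨hpart, hcard, hlen, hsep⟩, rfl⟩
    refine ⟨⟨(isListPartition_insertRelabel_iff hl hnd hcompl).2 hpart, ?_, ?_,
      (separatesBelow_insertRelabel_iff hψ hlsep).2 hsep⟩, mem_insert_self _ _⟩
    · rw [card_insertRelabel hl hcompl, hcard]
      ring
    · intro L hL
      obtain rfl | ⟨L', hL', rfl⟩ := mem_insertRelabel.1 hL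
      · exact hlS
      · simpa using hlen L' hL'

noncomputable def zeroBlocks (n t s : ℕ) : Finset (List (Fin (n + (t + 1)))) :=
  {l ∈ nodupLists (insert 0 ({x | t + 1 ≤ x.val} : Finset (Fin _))) s | 0 ∈ l}

theorem mem_zeroBlocks {n t s : ℕ} {l : List (Fin (n + (t + 1)))} :
    l ∈ zeroBlocks n t s ↔
      l.Nodup ∧ l.length = s ∧ 0 ∈ l ∧ ∀ x ∈ l, (x : ℕ) < t + 1 → x = 0 := by
  simp only [zeroBlocks, mem_filter, mem_nodupLists, mem_insert, mem_univ, true_and]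
  grind

theorem card_zeroBlocks (n t s : ℕ) : #(zeroBlocks n t (s + 1)) = (s + 1)! * n.choose s := by
  have hB : #({x | t + 1 ≤ x.val} : Finset (Fin (n + (t + 1)))) = n := by
    have := card_filter_add_card_filter_not (s := (univ : Finset (Fin (n + (t + 1)))))
      (fun x => x.val < t + 1)
    simp only [Fin.card_filter_val_lt, not_lt, card_univ, Fintype.card_fin] at this
    omega
  rw [zeroBlocks, card_filter_mem_nodupLists_insert (by simp), hB]

theorem mem_Icc_of_mem_zeroBlocks {n t s : ℕ} {l : List (Fin (n + (t + 1)))}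
    (hl : l ∈ zeroBlocks n t s) : s ∈ Icc 1 (n + 1) := by
  obtain ⟨-, rfl, h0, -⟩ := mem_zeroBlocks.1 hl
  refine mem_Icc.2 ⟨List.length_pos_of_mem h0, not_lt.1 fun hlen => ?_⟩
  obtain ⟨s, hs⟩ : ∃ s, l.length = s + 1 := ⟨l.length - 1, by omega⟩
  have hempty := card_zeroBlocks n t s
  rw [Nat.choose_eq_zero_of_lt (by omega), mul_zero, card_eq_zero, ← hs] at hempty
  exact notMem_empty l (hempty ▸ hl)

theorem mem_zeroBlocks_length {S : Set ℕ} {n t k : ℕ} {P : Finset (List (Fin (n + (t + 1))))}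
    {l : List (Fin (n + (t + 1)))} (hP : P ∈ srLahSet S (t + 1) n k) (hlP : l ∈ P) (h0 : 0 ∈ l) :
    l ∈ zeroBlocks n t l.length := by
  obtain ⟨hpart, -, -, hsep⟩ := hP
  refine mem_zeroBlocks.2 ⟨(hpart.1 l hlP).2, rfl, h0, fun x hx hxt => ?_⟩
  by_contra hx0
  exact hsep x 0 hxt (by simp) hx0 l hlP hx h0

theorem card_srLahSet_sep_mem {S : Set ℕ} {n t s k : ℕ} {l : List (Fin (n + (t + 1)))}
    (hl : l ∈ zeroBlocks n t s) (hsS : s ∈ S) :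
    Nat.card {P ∈ srLahSet S (t + 1) n k | l ∈ P} = srLah S t (n + 1 - s) k := by
  have hs := (mem_Icc.1 (mem_Icc_of_mem_zeroBlocks hl)).2
  obtain ⟨hnd, rfl, h0, hl0⟩ := mem_zeroBlocks.1 hl
  obtain ⟨ψ, hcompl, hψ⟩ := exists_embedding_compl hnd hs h0 hl0
  have hsep : ∀ x ∈ l, ∀ y ∈ l, (x : ℕ) < t + 1 → (y : ℕ) < t + 1 → x = y :=
    fun x hx y hy hxt hyt => (hl0 x hx hxt).trans (hl0 y hy hyt).symm
  rw [srLahSet_sep_mem_eq_image (List.ne_nil_of_mem h0) hnd hsS hsep hcompl hψ,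
    Nat.card_image_of_injective (insertRelabel_injective (List.ne_nil_of_mem h0) hcompl)]
  rfl

theorem srLah_succ_eq_sum (S : Set ℕ) (t n k : ℕ) :
    srLah S (t + 1) n k = ∑ s ∈ {s ∈ Icc 1 (n + 1) | s ∈ S},
      s ! * n.choose (s - 1) * srLah S t (n + 1 - s) k := by
  have hfin := srLahSet_finite S (t + 1) n k
  rw [srLah, Nat.card_eq_card_finite_toFinset hfin,
    card_eq_sum_card_filter_mem (fun P hP => (hfin.mem_toFinset.1 hP).1) 0
      (C := ({s ∈ Icc 1 (n + 1) | s ∈ S} : Finset ℕ).biUnion (zeroBlocks n t)) ?_ ?_,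
    sum_biUnion ?_]
  · refine sum_congr rfl fun s hs => ?_
    have hfiber : ∀ l ∈ zeroBlocks n t s,
        #{P ∈ hfin.toFinset | l ∈ P} = srLah S t (n + 1 - s) k := by
      intro l hl
      have hcoe : (({P ∈ hfin.toFinset | l ∈ P} : Finset _) : Set _) =
          {P ∈ srLahSet S (t + 1) n k | l ∈ P} := by
        ext
        simp
      rw [← card_srLahSet_sep_mem hl (mem_filter.1 hs).2, ← hcoe, Nat.card_coe_set_eq,
        Set.ncard_coe_finset]
    rw [sum_congr rfl hfiber, sum_const, smul_eq_mul]
    obtain ⟨s, rfl⟩ := Nat.exists_eq_add_of_le' (mem_Icc.1 (mem_filter.1 hs).1).1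
    rw [card_zeroBlocks, Nat.add_sub_cancel]
  · intro s _ s' _ hne
    simp only [onFun, disjoint_left]
    intro l hl hl'
    exact hne ((mem_zeroBlocks.1 hl).2.1.symm.trans (mem_zeroBlocks.1 hl').2.1)
  · intro l hl
    obtain ⟨s, -, hl⟩ := mem_biUnion.1 hl
    exact (mem_zeroBlocks.1 hl).2.2.1
  · intro P hP l hlP h0
    have hl := mem_zeroBlocks_length (hfin.mem_toFinset.1 hP) hlP h0
    exact mem_biUnion.2 ⟨l.length, mem_filter.2 ⟨mem_Icc_of_mem_zeroBlocks hl,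
      (hfin.mem_toFinset.1 hP).2.2.1 l hlP⟩, hl⟩

theorem srLah_identity_special_list_general (S : Set ℕ) (hS : ∀ s ∈ S, 0 < s) (r n k : ℕ)
    (hr : 1 ≤ r) :
    (srLah S r n k : ℤ) =
      ∑ᶠ s ∈ S, (s.factorial : ℤ) * (n.choose (s - 1) : ℤ) *
        srLahZ S (r - 1) ((n : ℤ) - s + 1) k := by
  obtain ⟨t, rfl⟩ := Nat.exists_eq_add_of_le' hr
  rw [finsum_mem_eq_sum_of_subset _ (t := {s ∈ Icc 1 (n + 1) | s ∈ S}), srLah_succ_eq_sum,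
    Nat.cast_sum]
  · refine sum_congr rfl fun s hs => ?_
    obtain ⟨hs1, hsn⟩ := mem_Icc.1 (mem_filter.1 hs).1
    have hZ : srLahZ S t ((n : ℤ) - s + 1) k = srLah S t (n + 1 - s) k := by
      rw [srLahZ, if_pos (by omega), Int.toNat_natCast,
        show ((n : ℤ) - s + 1).toNat = n + 1 - s by omega]
    simp [hZ]
  · rintro s ⟨hsS, hs⟩
    refine mem_filter.2 ⟨mem_Icc.2 ⟨hS s hsS, not_lt.1 fun hsn => hs ?_⟩, hsS⟩
    simp [Nat.choose_eq_zero_of_lt (show n < s - 1 by omega)]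
  · intro s hs
    exact (mem_filter.1 hs).2

/-- `L_{S,r}(n,k) = Σ_{s∈S} s!·C(n,s−1)·L_{S,r−1}(n−s+1,k)` for `r ≥ 1`. -/
theorem srLah_identity_special_list (S : Set ℕ) (hS : ∀ s ∈ S, 0 < s) (r n k : ℕ)
    (hr : 1 ≤ r) (hn : 1 ≤ n) (hk : 1 ≤ k) :
    (srLah S r n k : ℤ) =
      ∑ᶠ s ∈ S, (s.factorial : ℤ) * (n.choose (s - 1) : ℤ) *
        srLahZ S (r - 1) ((n : ℤ) - s + 1) k :=
  srLah_identity_special_list_general S hS r n k hr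
end

section
/- Let S be a set of positive integers with 1 ∈ S, let r ≥ 0 and n ≥ 0 be integers. The (n+1)×(n+1) lower-triangular integer matrix A with entries A_{i,j} = L_{S,r}(i,j) for 0 ≤ i,j ≤ n has all diagonal entries equal to 1, hence is invertible over ℤ; let B = A^{−1}. Then, in the polynomial ring ℤ[x], Σ_{k=0}^{n} L_{S,r}(n,k)·x^k = (−1)^n · det M, where M is the (n+1)×(n+1) matrix over ℤ[x] with first row M_{0,j} = x^j for 0 ≤ j ≤ n, and M_{i,j} = B_{j, i−1} for 1 ≤ i ≤ n and 0 ≤ j ≤ n. -/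
open Finset
open scoped Classical

/-- The `(n+1)×(n+1)` matrix of `(S,r)`-Lah numbers. -/
noncomputable def lahMatrix (S : Set ℕ) (r n : ℕ) : Matrix (Fin (n + 1)) (Fin (n + 1)) ℤ :=
  Matrix.of fun i j => (srLah S r i j : ℤ)

/-- The inverse `(n+1)×(n+1)` matrix of `(S,r)`-Lah numbers. -/
noncomputable def lahInvMatrix (S : Set ℕ) (r n : ℕ) : Matrix (Fin (n + 1)) (Fin (n + 1)) ℤ :=
  (lahMatrix S r n)⁻¹

/-- The matrix `M` of Theorem: first row `x^j`, and `M_{i,j} = B_{j,i−1}` for `i ≥ 1`,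
where `B` is the inverse Lah matrix. -/
noncomputable def lahDetMatrix (S : Set ℕ) (r n : ℕ) :
    Matrix (Fin (n + 1)) (Fin (n + 1)) (Polynomial ℤ) :=
  Matrix.of fun i j =>
    if (i : ℕ) = 0 then Polynomial.X ^ (j : ℕ)
    else Polynomial.C
      (lahInvMatrix S r n j ⟨(i : ℕ) - 1, Nat.lt_of_le_of_lt (Nat.sub_le _ _) i.isLt⟩)

/-!
The Lah matrix `A` is lower unitriangular: `n + r` elements cannot be split into more than `n + r`
nonempty lists, and a split into exactly `n + r` lists is the split into singletons. Multiplying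
`M` on the right by `Aᵀ` turns its rows `i ≥ 1` (the columns of `B = A⁻¹`) into the unit rows
`e_{i-1}`, and its first row `(x^j)` into the Lah polynomials `(∑_j A_{k,j} x^j)_k`. Expanded along
its last column, the product has determinant `(-1)ⁿ` times the Lah polynomial of degree `n`,
while `det Aᵀ = 1`.
-/

open Matrix Polynomial

namespace IsListPartition

variable {N : ℕ} {P : Finset (List (Fin N))}

theorem sum_length (hP : IsListPartition P) : ∑ l ∈ P, l.length = N := by
  have hcover : P.biUnion List.toFinset = univ := by
    refine eq_univ_of_forall fun x => ?_
    obtain ⟨l, ⟨hl, hx⟩, -⟩ := hP.2 x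
    exact mem_biUnion.2 ⟨l, hl, List.mem_toFinset.2 hx⟩
  have hdisj : (P : Set (List (Fin N))).PairwiseDisjoint List.toFinset := by
    intro l₁ h₁ l₂ h₂ hne
    refine Finset.disjoint_left.2 fun x hx₁ hx₂ => hne ?_
    exact (hP.2 x).unique ⟨h₁, List.mem_toFinset.1 hx₁⟩ ⟨h₂, List.mem_toFinset.1 hx₂⟩
  calc ∑ l ∈ P, l.length = ∑ l ∈ P, l.toFinset.card :=
        sum_congr rfl fun l hl => (List.toFinset_card_of_nodup (hP.1 l hl).2).symm
    _ = (P.biUnion List.toFinset).card := (card_biUnion hdisj).symm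
    _ = N := by rw [hcover, card_univ, Fintype.card_fin]

theorem one_le_length (hP : IsListPartition P) {l : List (Fin N)} (hl : l ∈ P) :
    1 ≤ l.length :=
  List.length_pos_iff.2 (hP.1 l hl).1

theorem card_le (hP : IsListPartition P) : P.card ≤ N :=
  calc P.card = ∑ _ ∈ P, 1 := card_eq_sum_ones P
    _ ≤ ∑ l ∈ P, l.length := sum_le_sum fun _ hl => hP.one_le_length hl
    _ = N := hP.sum_length

theorem length_eq_one_of_card_eq (hP : IsListPartition P) (hcard : P.card = N)
    {l : List (Fin N)} (hl : l ∈ P) : l.length = 1 := by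
  have hsum : ∑ _ ∈ P, 1 = ∑ l ∈ P, l.length := by
    rw [← card_eq_sum_ones, hcard, hP.sum_length]
  exact ((sum_eq_sum_iff_of_le fun _ hl => hP.one_le_length hl).1 hsum l hl).symm

theorem eq_image_singleton_of_card_eq (hP : IsListPartition P) (hcard : P.card = N) :
    P = univ.image fun x => [x] := by
  refine eq_of_subset_of_card_le (fun l hl => ?_) ?_
  · obtain ⟨a, rfl⟩ := List.length_eq_one_iff.1 (hP.length_eq_one_of_card_eq hcard hl)
    exact mem_image_of_mem _ (mem_univ a)
  · rw [hcard]
    exact card_image_le.trans (by simp)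

end IsListPartition

theorem isListPartition_image_singleton (N : ℕ) :
    IsListPartition (univ.image fun x : Fin N => [x]) := by
  refine ⟨by simp, fun x => ⟨[x], by simp, ?_⟩⟩
  rintro l ⟨hl, hx⟩
  obtain ⟨y, -, rfl⟩ := mem_image.1 hl
  simp_all

section srLah

variable (S : Set ℕ) (r : ℕ) {n k : ℕ}

theorem srLah_eq_zero_of_lt (h : n < k) : srLah S r n k = 0 := by
  have hempty : srLahSet S r n k = ∅ :=
    Set.eq_empty_of_forall_notMem fun P ⟨hP, hcard, _⟩ => by
      have := hP.card_le
      omega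
  simp [srLah, hempty]

variable {S}

theorem srLahSet_self (h1 : 1 ∈ S) (n : ℕ) :
    srLahSet S r n n = {univ.image fun x => [x]} := by
  refine Set.eq_singleton_iff_unique_mem.2 ⟨⟨isListPartition_image_singleton _, ?_, ?_, ?_⟩, ?_⟩
  · rw [card_image_of_injective _ List.singleton_injective, card_univ, Fintype.card_fin]
  · simp [h1]
  · simp only [mem_image, mem_univ, true_and]
    rintro i j - - hij _ ⟨x, rfl⟩ hi hj
    simp_all
  · rintro P ⟨hP, hcard, -⟩
    exact hP.eq_image_singleton_of_card_eq hcard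

theorem srLah_self (h1 : 1 ∈ S) (n : ℕ) : srLah S r n n = 1 := by
  simp [srLah, srLahSet_self r h1]

end srLah

section vecCons

variable {R : Type*} [CommRing R] {n : ℕ}

theorem det_vecCons_single_castSucc (p : Fin (n + 1) → R) :
    (of (vecCons p fun i => Pi.single i.castSucc 1) : Matrix _ _ R).det =
      (-1) ^ n * p (Fin.last n) := by
  have hminor : (of (vecCons p fun i => Pi.single i.castSucc 1) : Matrix _ _ R).submatrix
      Fin.succ Fin.castSucc = 1 := by
    ext i j
    simp [Pi.single_apply, one_apply, eq_comm]
  rw [det_succ_column _ (Fin.last n), sum_eq_single 0]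
  · simp [hminor]
  · intro i _ hi
    obtain ⟨i, rfl⟩ := Fin.exists_succ_eq.2 hi
    simp [Fin.castSucc_ne_last]
  · simp

theorem det_vecCons_mul_det_of_mul_eq_one (v : Fin (n + 1) → R)
    {A B : Matrix (Fin (n + 1)) (Fin (n + 1)) R} (hAB : A * B = 1) :
    (of (vecCons v fun i j => B j i.castSucc)).det * A.det =
      (-1) ^ n * ∑ k, A (Fin.last n) k * v k := by
  have hrows : of (vecCons v fun i j => B j i.castSucc) * Aᵀ =
      of (vecCons (A *ᵥ v) fun i => Pi.single i.castSucc 1) := by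
    rw [cons_mul, vecMul_transpose]
    congr
    ext i k
    simp only [of_symm_apply, mul_apply, of_apply, transpose_apply]
    simp_rw [mul_comm (B _ _)]
    rw [← mul_apply, hAB, one_apply, Pi.single_apply]
  rw [← det_transpose A, ← det_mul, hrows, det_vecCons_single_castSucc, mulVec, dotProduct]

end vecCons

section lahMatrix

variable {S : Set ℕ} {r n : ℕ}

theorem lahMatrix_isLowerTriangular : (lahMatrix S r n).IsLowerTriangular := fun i j hij => by
  simp [lahMatrix, srLah_eq_zero_of_lt S r (show (i : ℕ) < j from hij)]

theorem lahMatrix_apply_self (h1 : 1 ∈ S) (i : Fin (n + 1)) : lahMatrix S r n i i = 1 := by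
  simp [lahMatrix, srLah_self r h1]

theorem det_lahMatrix (h1 : 1 ∈ S) : (lahMatrix S r n).det = 1 := by
  rw [det_of_isLowerTriangular _ lahMatrix_isLowerTriangular]
  exact prod_eq_one fun i _ => lahMatrix_apply_self h1 i

theorem lahDetMatrix_eq_vecCons :
    lahDetMatrix S r n = of (vecCons (fun j : Fin (n + 1) => X ^ (j : ℕ))
      fun (i : Fin n) j => C.mapMatrix (lahInvMatrix S r n) j i.castSucc) := by
  ext i j
  refine Fin.cases ?_ (fun i => ?_) i
  · simp [lahDetMatrix]
  · simp [lahDetMatrix, Fin.castSucc, Fin.castAdd, Fin.castLE]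

end lahMatrix

theorem srLah_polynomial_det_general (S : Set ℕ) (h1 : (1 : ℕ) ∈ S)
    (r n : ℕ) :
    (∀ i j : Fin (n + 1), (i : ℕ) < (j : ℕ) → lahMatrix S r n i j = 0) ∧
    (∀ i, lahMatrix S r n i i = 1) ∧
    IsUnit (lahMatrix S r n) ∧
    (∑ k ∈ Finset.range (n + 1), Polynomial.C (srLah S r n k : ℤ) * Polynomial.X ^ k) =
      (-1) ^ n * (lahDetMatrix S r n).det := by
  have hdet : IsUnit (lahMatrix S r n).det := (det_lahMatrix h1).symm ▸ isUnit_one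
  refine ⟨fun i j hij => lahMatrix_isLowerTriangular hij, lahMatrix_apply_self h1,
    (isUnit_iff_isUnit_det _).2 hdet, ?_⟩
  have hAB : C.mapMatrix (lahMatrix S r n) * C.mapMatrix (lahInvMatrix S r n) = 1 := by
    rw [← map_mul, lahInvMatrix, mul_nonsing_inv _ hdet, map_one]
  have hdetM := det_vecCons_mul_det_of_mul_eq_one (fun j : Fin (n + 1) => X ^ (j : ℕ)) hAB
  rw [← RingHom.map_det, det_lahMatrix h1, map_one, mul_one] at hdetM
  rw [lahDetMatrix_eq_vecCons, hdetM, ← mul_assoc, ← mul_pow, neg_one_mul, neg_neg, one_pow,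
    one_mul, ← Fin.sum_univ_eq_sum_range (fun k => C (srLah S r n k : ℤ) * X ^ k)]
  simp [lahMatrix]

/-- the Lah matrix is lower triangular with unit diagonal, hence invertible
over ℤ, and the `(S,r)`-Lah polynomial equals `(−1)ⁿ` times the determinant of `M`. -/
theorem srLah_polynomial_det (S : Set ℕ) (hS : ∀ s ∈ S, 0 < s) (h1 : (1 : ℕ) ∈ S)
    (r n : ℕ) :
    (∀ i j : Fin (n + 1), (i : ℕ) < (j : ℕ) → lahMatrix S r n i j = 0) ∧
    (∀ i, lahMatrix S r n i i = 1) ∧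
    IsUnit (lahMatrix S r n) ∧
    (∑ k ∈ Finset.range (n + 1), Polynomial.C (srLah S r n k : ℤ) * Polynomial.X ^ k) =
      (-1) ^ n * (lahDetMatrix S r n).det :=
  srLah_polynomial_det_general S h1 r n
end

section
/- Let S be a set of positive integers, r ≥ 0 an integer, and n, k natural numbers. Then L_{S,r}(n,k) equals the number of pairs (ℓ̃, a) where: ℓ̃ = (ℓ̃_1,…,ℓ̃_r) is an r-tuple of asterisk lists with labels from {1,…,n} such that the size of each ℓ̃_i belongs to S−1 = {s−1 : s ∈ S}; a is a set of k pairwise disjoint non-empty lists with labels from {1,…,n}, each of length belonging to S; and the underlying sets of the lists ℓ̃_1,…,ℓ̃_r and of the lists in a are pairwise disjoint and their union is {1,…,n}. -/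
open Finset
open scoped Classical

/-!
Splitting the list through a root `i ≤ r` at `i` leaves an asterisk list `(ℓ¹, ℓ²)` of size one
less than the list, while the lists containing no root are arbitrary; relabelling the non-roots
`r + 1, …, r + n` as `1, …, n` turns a partition counted by `L_{S,r}(n,k)` into a pair `(ℓ̃, a)`,
and gluing `ℓ¹ i ℓ²` back together inverts this.
-/

open Function

namespace SRLah

variable {α ι β : Type*}

def IsAsteriskConfig (S : Set ℕ) (k : ℕ) (f : ι → List β × List β) (a : Finset (List β)) : Prop :=
  (∀ i, ((f i).1 ++ (f i).2).Nodup ∧ (f i).1.length + (f i).2.length + 1 ∈ S) ∧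
  a.card = k ∧
  (∀ l ∈ a, l ≠ [] ∧ l.Nodup ∧ l.length ∈ S) ∧
  (∀ x : β, (∃ i, x ∈ (f i).1 ++ (f i).2) ∨ ∃ l ∈ a, x ∈ l) ∧
  (∀ i j, i ≠ j → ∀ x, x ∈ (f i).1 ++ (f i).2 → x ∉ (f j).1 ++ (f j).2) ∧
  (∀ i, ∀ l ∈ a, ∀ x, x ∈ (f i).1 ++ (f i).2 → x ∉ l) ∧
  (∀ l ∈ a, ∀ l' ∈ a, l ≠ l' → ∀ x ∈ l, x ∉ l')

/-- `srLahSet` with the roots `σ (inl i)` in place of `1, …, r`. -/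
def IsRootedPartition [Fintype ι] (S : Set ℕ) (k : ℕ) (σ : ι ⊕ β ≃ α) (P : Finset (List α)) :
    Prop :=
  ((∀ l ∈ P, l ≠ [] ∧ l.Nodup) ∧ ∀ x, ∃! l, l ∈ P ∧ x ∈ l) ∧
  P.card = k + Fintype.card ι ∧ (∀ l ∈ P, l.length ∈ S) ∧
  ∀ i j, i ≠ j → ∀ l ∈ P, σ (.inl i) ∈ l → σ (.inl j) ∉ l

section Rooted

variable {σ : ι ⊕ β ≃ α}

variable (σ) in
def rootedList (i : ι) (p : List β × List β) : List α :=
  p.1.map (σ ∘ .inr) ++ σ (.inl i) :: p.2.map (σ ∘ .inr)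

lemma inr_injective (σ : ι ⊕ β ≃ α) : Injective (σ ∘ .inr) :=
  σ.injective.comp Sum.inr_injective

@[simp]
lemma inl_notMem_map_inr {j : ι} {m : List β} : σ (.inl j) ∉ m.map (σ ∘ .inr) := by
  simp

@[simp]
lemma inr_mem_map_inr {y : β} {m : List β} : σ (.inr y) ∈ m.map (σ ∘ .inr) ↔ y ∈ m :=
  List.mem_map_of_injective (inr_injective σ)

@[simp]
lemma inl_mem_rootedList {i j : ι} {p : List β × List β} :
    σ (.inl j) ∈ rootedList σ i p ↔ j = i := by
  simp [rootedList]

@[simp]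
lemma inr_mem_rootedList {i : ι} {y : β} {p : List β × List β} :
    σ (.inr y) ∈ rootedList σ i p ↔ y ∈ p.1 ++ p.2 := by
  simp [rootedList]

lemma length_rootedList (i : ι) (p : List β × List β) :
    (rootedList σ i p).length = p.1.length + p.2.length + 1 := by
  simp [rootedList]
  omega

lemma nodup_rootedList_iff {i : ι} {p : List β × List β} :
    (rootedList σ i p).Nodup ↔ (p.1 ++ p.2).Nodup := by
  rw [rootedList, List.nodup_middle, List.nodup_cons, ← List.map_append,
    List.nodup_map_iff (inr_injective σ)]
  simp

lemma rootedList_ne_map {i : ι} {p : List β × List β} {m : List β} :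
    rootedList σ i p ≠ m.map (σ ∘ .inr) :=
  fun h => inl_notMem_map_inr (h ▸ inl_mem_rootedList.2 rfl)

lemma rootedList_inj {i j : ι} {p q : List β × List β} :
    rootedList σ i p = rootedList σ j q ↔ i = j ∧ p = q := by
  refine ⟨fun h => ?_, by rintro ⟨rfl, rfl⟩; rfl⟩
  have hi : σ (.inl i) ∈ rootedList σ j q := h ▸ inl_mem_rootedList.2 rfl
  obtain rfl := inl_mem_rootedList.1 hi
  rw [rootedList, rootedList, List.append_cons_inj_of_notMem (by simp) (by simp)] at h
  have hmap := List.map_injective_iff.2 (inr_injective σ)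
  exact ⟨rfl, Prod.ext (hmap h.1) (hmap h.2.2)⟩

lemma exists_map_inr_eq {l : List α} (h : ∀ i, σ (.inl i) ∉ l) :
    ∃ m : List β, m.map (σ ∘ .inr) = l := by
  show l ∈ Set.range (List.map (σ ∘ .inr))
  rw [Set.range_list_map]
  intro x hx
  obtain ⟨j | y, rfl⟩ := σ.surjective x
  · exact absurd hx (h j)
  · exact ⟨y, rfl⟩

end Rooted

section Assemble

variable [Fintype ι] [DecidableEq α] {σ : ι ⊕ β ≃ α}

variable (σ) in
def ofAsterisk (f : ι → List β × List β) (a : Finset (List β)) : Finset (List α) :=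
  a.image (List.map (σ ∘ .inr)) ∪ Finset.univ.image fun i => rootedList σ i (f i)

variable {f : ι → List β × List β} {a : Finset (List β)}

lemma mem_ofAsterisk {l : List α} :
    l ∈ ofAsterisk σ f a ↔ (∃ m ∈ a, m.map (σ ∘ .inr) = l) ∨ ∃ i, rootedList σ i (f i) = l := by
  simp [ofAsterisk]

lemma map_mem_ofAsterisk_iff {m : List β} : m.map (σ ∘ .inr) ∈ ofAsterisk σ f a ↔ m ∈ a := by
  simp [mem_ofAsterisk, rootedList_ne_map, (List.map_injective_iff.2 (inr_injective σ)).eq_iff]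

lemma rootedList_mem_ofAsterisk_iff {i : ι} {p : List β × List β} :
    rootedList σ i p ∈ ofAsterisk σ f a ↔ f i = p := by
  simp [mem_ofAsterisk, rootedList_ne_map.symm, rootedList_inj]

lemma card_ofAsterisk : (ofAsterisk σ f a).card = a.card + Fintype.card ι := by
  rw [ofAsterisk, card_union_of_disjoint, card_image_of_injective _
    (List.map_injective_iff.2 (inr_injective σ)),
    card_image_of_injective _ fun i j h => (rootedList_inj.1 h).1, card_univ]
  simp only [disjoint_left, mem_image, mem_univ, true_and, not_exists]
  rintro _ ⟨m, -, rfl⟩ i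
  exact rootedList_ne_map

lemma ofAsterisk_injective :
    Injective fun p : (ι → List β × List β) × Finset (List β) => ofAsterisk σ p.1 p.2 := by
  rintro ⟨f, a⟩ ⟨g, b⟩ h
  dsimp only at h
  obtain rfl : f = g := funext fun i =>
    (rootedList_mem_ofAsterisk_iff.1 (h ▸ rootedList_mem_ofAsterisk_iff.2 rfl)).symm
  congr
  ext m
  rw [← map_mem_ofAsterisk_iff (σ := σ) (f := f), h, map_mem_ofAsterisk_iff]

variable {S : Set ℕ} {k : ℕ}

lemma eq_of_mem_ofAsterisk
    (hff : ∀ i j, i ≠ j → ∀ x, x ∈ (f i).1 ++ (f i).2 → x ∉ (f j).1 ++ (f j).2)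
    (hfa : ∀ i, ∀ l ∈ a, ∀ x, x ∈ (f i).1 ++ (f i).2 → x ∉ l)
    (haa : ∀ l ∈ a, ∀ l' ∈ a, l ≠ l' → ∀ x ∈ l, x ∉ l')
    {x : α} {l₁ l₂ : List α} (hl₁ : l₁ ∈ ofAsterisk σ f a) (hl₂ : l₂ ∈ ofAsterisk σ f a)
    (hx₁ : x ∈ l₁) (hx₂ : x ∈ l₂) : l₁ = l₂ := by
  obtain ⟨i | y, rfl⟩ := σ.surjective x <;>
  rcases mem_ofAsterisk.1 hl₁ with ⟨m₁, hm₁, rfl⟩ | ⟨i₁, rfl⟩ <;>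
  rcases mem_ofAsterisk.1 hl₂ with ⟨m₂, hm₂, rfl⟩ | ⟨i₂, rfl⟩ <;>
  simp only [inl_notMem_map_inr, inl_mem_rootedList, inr_mem_map_inr, inr_mem_rootedList]
    at hx₁ hx₂
  · rw [← hx₁, ← hx₂]
  · by_contra hne
    exact haa m₁ hm₁ m₂ hm₂ (fun h => hne (h ▸ rfl)) y hx₁ hx₂
  · exact absurd hx₁ (hfa i₂ m₁ hm₁ y hx₂)
  · exact absurd hx₂ (hfa i₁ m₂ hm₂ y hx₁)
  · by_contra hne
    exact hff i₁ i₂ (fun h => hne (h ▸ rfl)) y hx₁ hx₂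

lemma IsAsteriskConfig.isRootedPartition (h : IsAsteriskConfig S k f a) :
    IsRootedPartition S k σ (ofAsterisk σ f a) := by
  obtain ⟨hf, hcard, ha, hcover, hff, hfa, haa⟩ := h
  refine ⟨⟨?_, fun x => existsUnique_of_exists_of_unique ?_ ?_⟩, by rw [card_ofAsterisk, hcard],
    ?_, ?_⟩
  · intro l hl
    rcases mem_ofAsterisk.1 hl with ⟨m, hm, rfl⟩ | ⟨i, rfl⟩
    · exact ⟨by simpa using (ha m hm).1, (ha m hm).2.1.map (inr_injective σ)⟩
    · exact ⟨by simp [rootedList], nodup_rootedList_iff.2 (hf i).1⟩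
  · obtain ⟨i | y, rfl⟩ := σ.surjective x
    · exact ⟨_, rootedList_mem_ofAsterisk_iff.2 rfl, inl_mem_rootedList.2 rfl⟩
    rcases hcover y with ⟨i, hy⟩ | ⟨m, hm, hy⟩
    · exact ⟨_, rootedList_mem_ofAsterisk_iff.2 rfl, inr_mem_rootedList.2 hy⟩
    · exact ⟨_, map_mem_ofAsterisk_iff.2 hm, inr_mem_map_inr.2 hy⟩
  · exact fun l₁ l₂ h₁ h₂ => eq_of_mem_ofAsterisk hff hfa haa h₁.1 h₂.1 h₁.2 h₂.2
  · intro l hl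
    rcases mem_ofAsterisk.1 hl with ⟨m, hm, rfl⟩ | ⟨i, rfl⟩
    · simpa using (ha m hm).2.2
    · simpa [length_rootedList] using (hf i).2
  · intro i j hij l hl hi hj
    rcases mem_ofAsterisk.1 hl with ⟨m, hm, rfl⟩ | ⟨i', rfl⟩
    · exact inl_notMem_map_inr hi
    · exact hij ((inl_mem_rootedList.1 hi).trans (inl_mem_rootedList.1 hj).symm)

lemma isAsteriskConfig_of_isRootedPartition_ofAsterisk
    (h : IsRootedPartition S k σ (ofAsterisk σ f a)) : IsAsteriskConfig S k f a := by
  obtain ⟨⟨hne, huniq⟩, hcard, hlen, -⟩ := h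
  have hroot (i : ι) : rootedList σ i (f i) ∈ ofAsterisk σ f a :=
    rootedList_mem_ofAsterisk_iff.2 rfl
  have hlift {m : List β} (hm : m ∈ a) : m.map (σ ∘ .inr) ∈ ofAsterisk σ f a :=
    map_mem_ofAsterisk_iff.2 hm
  refine ⟨fun i => ⟨?_, ?_⟩, ?_, fun m hm => ⟨?_, ?_, ?_⟩, fun y => ?_, ?_, ?_, ?_⟩
  · exact nodup_rootedList_iff.1 (hne _ (hroot i)).2
  · simpa [length_rootedList] using hlen _ (hroot i)
  · rw [card_ofAsterisk] at hcard
    omega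
  · simpa using (hne _ (hlift hm)).1
  · exact (hne _ (hlift hm)).2.of_map
  · simpa using hlen _ (hlift hm)
  · obtain ⟨l, ⟨hl, hy⟩, -⟩ := huniq (σ (.inr y))
    rcases mem_ofAsterisk.1 hl with ⟨m, hm, rfl⟩ | ⟨i, rfl⟩
    · exact .inr ⟨m, hm, inr_mem_map_inr.1 hy⟩
    · exact .inl ⟨i, inr_mem_rootedList.1 hy⟩
  · intro i j hij y hi hj
    have := (huniq (σ (.inr y))).unique ⟨hroot i, inr_mem_rootedList.2 hi⟩
      ⟨hroot j, inr_mem_rootedList.2 hj⟩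
    exact hij (rootedList_inj.1 this).1
  · intro i m hm y hi hm'
    exact rootedList_ne_map ((huniq (σ (.inr y))).unique ⟨hroot i, inr_mem_rootedList.2 hi⟩
      ⟨hlift hm, inr_mem_map_inr.2 hm'⟩)
  · intro m hm m' hm' hne' y hy hy'
    have := (huniq (σ (.inr y))).unique ⟨hlift hm, inr_mem_map_inr.2 hy⟩
      ⟨hlift hm', inr_mem_map_inr.2 hy'⟩
    exact hne' (List.map_injective_iff.2 (inr_injective σ) this)

lemma exists_ofAsterisk_eq {P : Finset (List α)} (hnodup : ∀ l ∈ P, l.Nodup)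
    (huniq : ∀ x, ∃! l, l ∈ P ∧ x ∈ l)
    (hroot : ∀ i j, i ≠ j → ∀ l ∈ P, σ (.inl i) ∈ l → σ (.inl j) ∉ l) :
    ∃ f a, ofAsterisk σ f a = P := by
  choose L hL hL_unique using fun i => huniq (σ (.inl i))
  have hsplit (i : ι) : ∃ p, rootedList σ i p = L i := by
    obtain ⟨s, t, hst⟩ := List.mem_iff_append.1 (hL i).2
    have hnd := hnodup _ (hL i).1
    rw [hst, List.nodup_middle, List.nodup_cons, List.mem_append] at hnd
    have hno_root (j : ι) (hj : σ (.inl j) ∈ s ++ t) : False := by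
      obtain rfl | hij := eq_or_ne i j
      · exact hnd.1 (List.mem_append.1 hj)
      · refine hroot i j hij _ (hL i).1 (hL i).2 ?_
        rw [hst]
        exact List.mem_append.2 ((List.mem_append.1 hj).imp_right (List.mem_cons_of_mem _))
    obtain ⟨ms, hms⟩ := exists_map_inr_eq fun j hj => hno_root j (List.mem_append_left _ hj)
    obtain ⟨mt, hmt⟩ := exists_map_inr_eq fun j hj => hno_root j (List.mem_append_right _ hj)
    exact ⟨(ms, mt), by rw [rootedList, hms, hmt, hst]⟩
  choose f hf using hsplit
  refine ⟨f, P.preimage (List.map (σ ∘ .inr))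
    (List.map_injective_iff.2 (inr_injective σ)).injOn, ?_⟩
  ext l
  rw [mem_ofAsterisk]
  constructor
  · rintro (⟨m, hm, rfl⟩ | ⟨i, rfl⟩)
    · exact mem_preimage.1 hm
    · exact hf i ▸ (hL i).1
  · intro hl
    by_cases hr : ∃ i, σ (.inl i) ∈ l
    · obtain ⟨i, hi⟩ := hr
      exact .inr ⟨i, (hf i).trans (hL_unique i l ⟨hl, hi⟩).symm⟩
    · push Not at hr
      obtain ⟨m, rfl⟩ := exists_map_inr_eq hr
      exact .inl ⟨m, mem_preimage.2 hl, rfl⟩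

theorem image_ofAsterisk :
    (fun p : (ι → List β × List β) × Finset (List β) => ofAsterisk σ p.1 p.2) ''
      {p | IsAsteriskConfig S k p.1 p.2} = {P | IsRootedPartition S k σ P} := by
  ext P
  constructor
  · rintro ⟨p, hp, rfl⟩
    exact hp.isRootedPartition
  · intro hP
    obtain ⟨f, a, rfl⟩ :=
      exists_ofAsterisk_eq (fun l hl => (hP.1.1 l hl).2) hP.1.2 hP.2.2.2
    exact ⟨(f, a), isAsteriskConfig_of_isRootedPartition_ofAsterisk hP, rfl⟩

end Assemble

/-- Sends `inl i` to `i` and `inr y` to `r + y`: the roots are the first `r` elements. -/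
def finRootsEquiv (r n : ℕ) : Fin r ⊕ Fin n ≃ Fin (n + r) :=
  finSumFinEquiv.trans (finCongr (Nat.add_comm r n))

lemma lt_iff_exists_finRootsEquiv_inl {r n : ℕ} {x : Fin (n + r)} :
    (x : ℕ) < r ↔ ∃ i, finRootsEquiv r n (.inl i) = x :=
  ⟨fun h => ⟨⟨x, h⟩, by ext; simp [finRootsEquiv]⟩,
    by rintro ⟨i, rfl⟩; simp [finRootsEquiv]⟩

lemma srLahSet_eq (S : Set ℕ) (r n k : ℕ) :
    srLahSet S r n k = {P | IsRootedPartition S k (finRootsEquiv r n) P} := by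
  ext P
  simp only [srLahSet, IsRootedPartition, IsListPartition, Set.mem_ofPred_eq, Fintype.card_fin]
  refine and_congr_right' (and_congr_right' (and_congr_right' ⟨fun h i j hij => ?_, ?_⟩))
  · exact h _ _ (lt_iff_exists_finRootsEquiv_inl.2 ⟨i, rfl⟩)
      (lt_iff_exists_finRootsEquiv_inl.2 ⟨j, rfl⟩)
      ((finRootsEquiv r n).injective.ne (Sum.inl_injective.ne hij))
  · rintro h x y hx hy hxy
    obtain ⟨i, rfl⟩ := lt_iff_exists_finRootsEquiv_inl.1 hx
    obtain ⟨j, rfl⟩ := lt_iff_exists_finRootsEquiv_inl.1 hy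
    exact h i j (fun hij => hxy (hij ▸ rfl))

end SRLah

theorem srLah_asterisk_interpretation_general (S : Set ℕ) (r n k : ℕ) :
    srLah S r n k = Nat.card
      {p : (Fin r → List (Fin n) × List (Fin n)) × Finset (List (Fin n)) //
        (∀ i, ((p.1 i).1 ++ (p.1 i).2).Nodup ∧
          (p.1 i).1.length + (p.1 i).2.length + 1 ∈ S) ∧
        p.2.card = k ∧
        (∀ l ∈ p.2, l ≠ [] ∧ l.Nodup ∧ l.length ∈ S) ∧
        (∀ x : Fin n, (∃ i, x ∈ (p.1 i).1 ++ (p.1 i).2) ∨ ∃ l ∈ p.2, x ∈ l) ∧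
        (∀ i j, i ≠ j → ∀ x, x ∈ (p.1 i).1 ++ (p.1 i).2 → x ∉ (p.1 j).1 ++ (p.1 j).2) ∧
        (∀ i, ∀ l ∈ p.2, ∀ x, x ∈ (p.1 i).1 ++ (p.1 i).2 → x ∉ l) ∧
        (∀ l ∈ p.2, ∀ l' ∈ p.2, l ≠ l' → ∀ x ∈ l, x ∉ l')} := by
  rw [srLah, SRLah.srLahSet_eq, ← SRLah.image_ofAsterisk]
  exact Nat.card_image_of_injective SRLah.ofAsterisk_injective _

/-- `L_{S,r}(n,k)` counts pairs `(ℓ̃, a)` of an `r`-tuple of asterisk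
lists (pairs of lists) with sizes in `S−1`, and a set `a` of `k` nonempty lists with
lengths in `S`, all with pairwise disjoint underlying sets whose union is `{1,…,n}`. -/
theorem srLah_asterisk_interpretation (S : Set ℕ) (hS : ∀ s ∈ S, 0 < s) (r n k : ℕ) :
    srLah S r n k = Nat.card
      {p : (Fin r → List (Fin n) × List (Fin n)) × Finset (List (Fin n)) //
        (∀ i, ((p.1 i).1 ++ (p.1 i).2).Nodup ∧
          (p.1 i).1.length + (p.1 i).2.length + 1 ∈ S) ∧
        p.2.card = k ∧
        (∀ l ∈ p.2, l ≠ [] ∧ l.Nodup ∧ l.length ∈ S) ∧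
        (∀ x : Fin n, (∃ i, x ∈ (p.1 i).1 ++ (p.1 i).2) ∨ ∃ l ∈ p.2, x ∈ l) ∧
        (∀ i j, i ≠ j → ∀ x, x ∈ (p.1 i).1 ++ (p.1 i).2 → x ∉ (p.1 j).1 ++ (p.1 j).2) ∧
        (∀ i, ∀ l ∈ p.2, ∀ x, x ∈ (p.1 i).1 ++ (p.1 i).2 → x ∉ l) ∧
        (∀ l ∈ p.2, ∀ l' ∈ p.2, l ≠ l' → ∀ x ∈ l, x ∉ l')} :=
  srLah_asterisk_interpretation_general S r n k
end
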